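/- arXiv:2106.07603 — 13 statements merged into one kernel-verified Lean document; each statement's English description precedes it below -/
import Mathlib

section
/- Let E and V be real Banach spaces, let F : E → V be twice Fréchet differentiable with ‖F''(x)‖ ≤ K₂ for all x ∈ E, and let x₀ ∈ E be such that F'(x₀) is invertible (with bounded inverse), ‖F'(x₀)⁻¹‖ ≤ B and ‖F'(x₀)⁻¹ F(x₀)‖ ≤ η for positive constants K₂, B, η. If K₂Bη ≤ 1/2, then the Newton iteration x_{n+1} = x_n − F'(x_n)⁻¹F(x_n) starting from x₀ is well defined (F'(x_n) is invertible for every n) and the sequence (x_n) converges to a point x* ∈ E with F(x*) = 0. -/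
/-!
If `F'` is `K`-Lipschitz, `F'(x)` is invertible and `K ‖F'(x)⁻¹‖ ‖δ‖ ≤ 1/2` for the Newton step
`δ = F'(x)⁻¹ F(x)`, then at `x' = x - δ` the derivative moves by at most `K ‖δ‖`, so by the
Neumann series `F'(x')` is invertible with `‖F'(x')⁻¹‖ ≤ 2 ‖F'(x)⁻¹‖`; and the quadratic Taylor
bound `‖F(x')‖ ≤ K ‖δ‖² / 2` makes the next step `δ'` at most half as long as `δ`. Hence the
condition `K ‖F'(x)⁻¹‖ ‖δ‖ ≤ 1/2` propagates along the iteration, the steps decay geometrically,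
and at the limit `F(x*) = lim F'(xₙ) δₙ = 0`.
-/

section

open Filter Topology Set ContinuousLinearMap

variable {E V : Type*} [NormedAddCommGroup E] [NormedSpace ℝ E]
  [NormedAddCommGroup V] [NormedSpace ℝ V]

theorem norm_image_sub_sub_fderiv_le_of_lipschitz {F : E → V} {F' : E → E →L[ℝ] V}
    (hF : ∀ x, HasFDerivAt F (F' x) x) {K : ℝ} {x : E}
    (hlip : ∀ z, ‖F' z - F' x‖ ≤ K * ‖z - x‖) (y : E) :
    ‖F y - F x - F' x (y - x)‖ ≤ K / 2 * ‖y - x‖ ^ 2 := by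
  set v := y - x
  let g : ℝ → V := fun t => F (x + t • v) - F x - t • F' x v
  have hg : ∀ t, HasDerivAt g (F' (x + t • v) v - F' x v) t := by
    intro t
    have hline : HasDerivAt (fun t : ℝ => x + t • v) v t := by
      simpa using ((hasDerivAt_id t).smul_const v).const_add x
    exact (((hF _).comp_hasDerivAt t hline).sub_const (F x)).sub
      (by simpa using (hasDerivAt_id t).smul_const (F' x v))
  have hg' : ∀ t ∈ Ico (0 : ℝ) 1, ‖F' (x + t • v) v - F' x v‖ ≤ K * ‖v‖ ^ 2 * t := by
    intro t ht
    calc ‖F' (x + t • v) v - F' x v‖ = ‖(F' (x + t • v) - F' x) v‖ := rfl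
      _ ≤ ‖F' (x + t • v) - F' x‖ * ‖v‖ := le_opNorm _ _
      _ ≤ K * ‖t • v‖ * ‖v‖ := by gcongr; simpa using hlip (x + t • v)
      _ = K * ‖v‖ ^ 2 * t := by rw [norm_smul, Real.norm_of_nonneg ht.1]; ring
  have := image_norm_le_of_norm_deriv_right_le_deriv_boundary (f := g)
    (B := fun t => K / 2 * ‖v‖ ^ 2 * t ^ 2) (B' := fun t => K * ‖v‖ ^ 2 * t)
    (fun t _ => (hg t).continuousAt.continuousWithinAt) (fun t _ => (hg t).hasDerivWithinAt)
    (by simp [g]) (fun t => ((hasDerivAt_pow 2 t).const_mul _).congr_deriv (by ring))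
    hg' (right_mem_Icc.2 zero_le_one)
  simpa [g, v] using this

theorem ContinuousLinearEquiv.exists_eq_of_norm_symm_mul_norm_sub_lt [CompleteSpace E]
    (e : E ≃L[ℝ] V) (T : E →L[ℝ] V) (h : ‖(e.symm : V →L[ℝ] E)‖ * ‖T - e‖ < 1) :
    ∃ e' : E ≃L[ℝ] V, (e' : E →L[ℝ] V) = T ∧
      ‖(e'.symm : V →L[ℝ] E)‖ ≤
        ‖(e.symm : V →L[ℝ] E)‖ / (1 - ‖(e.symm : V →L[ℝ] E)‖ * ‖T - e‖) := by
  set β := ‖(e.symm : V →L[ℝ] E)‖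
  set q := β * ‖T - e‖
  set A : E →L[ℝ] E := (e.symm : V →L[ℝ] E).comp ((e : E →L[ℝ] V) - T)
  have hA : ‖A‖ < 1 := (opNorm_comp_le _ _).trans_lt (by rwa [norm_sub_rev])
  -- `T = e ∘ (1 - A)`, and `1 - A` is invertible by the Neumann series.
  let e' := (ContinuousLinearEquiv.unitsEquiv ℝ E (Units.oneSub A hA)).trans e
  have he' : (e' : E →L[ℝ] V) = T := by ext z; simp [e', A]
  refine ⟨e', he', opNorm_le_bound _ (div_nonneg (norm_nonneg _) (by linarith)) fun w => ?_⟩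
  set y := e'.symm w
  have hTy : T y = w := by rw [← he']; exact e'.apply_symm_apply w
  have hy : y = e.symm w - e.symm ((T - e) y) := by simp [← hTy]
  have : ‖y‖ ≤ β * ‖w‖ + q * ‖y‖ :=
    calc ‖y‖ = ‖e.symm w - e.symm ((T - e) y)‖ := congrArg norm hy
      _ ≤ ‖e.symm w‖ + ‖e.symm ((T - e) y)‖ := norm_sub_le _ _
      _ ≤ β * ‖w‖ + β * (‖T - e‖ * ‖y‖) :=
        add_le_add (le_opNorm (e.symm : V →L[ℝ] E) w)
          ((le_opNorm (e.symm : V →L[ℝ] E) _).trans (by gcongr; exact le_opNorm _ _))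
      _ = β * ‖w‖ + q * ‖y‖ := by ring
  rw [div_mul_eq_mul_div, le_div_iff₀ (by linarith)]
  change ‖y‖ * (1 - q) ≤ β * ‖w‖
  linarith

theorem exists_newton_step_invariant [CompleteSpace E] {F : E → V} {F' : E → E →L[ℝ] V}
    (hF : ∀ x, HasFDerivAt F (F' x) x) {K : ℝ} (hK : 0 ≤ K)
    (hlip : ∀ a b, ‖F' a - F' b‖ ≤ K * ‖a - b‖) {x : E} (e : E ≃L[ℝ] V)
    (he : (e : E →L[ℝ] V) = F' x)
    (hx : K * ‖(e.symm : V →L[ℝ] E)‖ * ‖e.symm (F x)‖ ≤ 1 / 2) :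
    ∃ e' : E ≃L[ℝ] V, (e' : E →L[ℝ] V) = F' (x - e.symm (F x)) ∧
      K * ‖(e'.symm : V →L[ℝ] E)‖ * ‖e'.symm (F (x - e.symm (F x)))‖ ≤ 1 / 2 ∧
      ‖e'.symm (F (x - e.symm (F x)))‖ ≤ ‖e.symm (F x)‖ / 2 := by
  set β := ‖(e.symm : V →L[ℝ] E)‖
  set δ := ‖e.symm (F x)‖
  set x' := x - e.symm (F x)
  have hstep : x' - x = -e.symm (F x) := by simp [x']
  have hdist : ‖x' - x‖ = δ := by rw [hstep, norm_neg]
  have hβ : 0 ≤ β := norm_nonneg _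
  have hq : β * ‖F' x' - e‖ ≤ 1 / 2 :=
    calc β * ‖F' x' - e‖ ≤ β * (K * δ) := by rw [he, ← hdist]; gcongr; exact hlip _ _
      _ ≤ 1 / 2 := by linarith
  obtain ⟨e', he', hβ'⟩ := e.exists_eq_of_norm_symm_mul_norm_sub_lt (F' x') (by linarith)
  have hβ'2 : ‖(e'.symm : V →L[ℝ] E)‖ ≤ 2 * β := by
    refine hβ'.trans ?_
    rw [div_le_iff₀ (by linarith)]
    nlinarith
  -- The Newton step kills the linear term of the Taylor expansion at `x`.
  have hres : ‖F x'‖ ≤ K / 2 * δ ^ 2 := by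
    have hlin : F' x (x' - x) = -F x := by rw [hstep, ← he]; simp
    have := norm_image_sub_sub_fderiv_le_of_lipschitz hF (fun z => hlip z x) x'
    rwa [hlin, sub_neg_eq_add, sub_add_cancel, hdist] at this
  have hδ' : ‖e'.symm (F x')‖ ≤ δ / 2 :=
    calc ‖e'.symm (F x')‖ ≤ 2 * β * (K / 2 * δ ^ 2) :=
          (le_opNorm (e'.symm : V →L[ℝ] E) _).trans (by gcongr)
      _ = (K * β * δ) * δ := by ring
      _ ≤ 1 / 2 * δ := by gcongr
      _ = δ / 2 := by ring
  refine ⟨e', he', ?_, hδ'⟩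
  calc K * ‖(e'.symm : V →L[ℝ] E)‖ * ‖e'.symm (F x')‖ ≤ K * (2 * β) * (δ / 2) := by gcongr
    _ = K * β * δ := by ring
    _ ≤ 1 / 2 := hx

/-- The Newton step; `ContinuousLinearMap.inverse` takes the junk value `0` where `F' x` is not
invertible. -/
noncomputable def newtonMap (F : E → V) (F' : E → E →L[ℝ] V) (x : E) : E :=
  x - (F' x).inverse (F x)

theorem newtonMap_eq {F : E → V} {F' : E → E →L[ℝ] V} {x : E} (e : E ≃L[ℝ] V)
    (he : (e : E →L[ℝ] V) = F' x) : newtonMap F F' x = x - e.symm (F x) := by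
  rw [newtonMap, ← he, inverse_equiv]
  rfl

theorem exists_newtonMap_iterate_invariant [CompleteSpace E] {F : E → V}
    {F' : E → E →L[ℝ] V} (hF : ∀ x, HasFDerivAt F (F' x) x) {K : ℝ} (hK : 0 ≤ K)
    (hlip : ∀ a b, ‖F' a - F' b‖ ≤ K * ‖a - b‖) {x₀ : E} (e₀ : E ≃L[ℝ] V)
    (he₀ : (e₀ : E →L[ℝ] V) = F' x₀)
    (h₀ : K * ‖(e₀.symm : V →L[ℝ] E)‖ * ‖e₀.symm (F x₀)‖ ≤ 1 / 2) (n : ℕ) :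
    ∃ e : E ≃L[ℝ] V, (e : E →L[ℝ] V) = F' ((newtonMap F F')^[n] x₀) ∧
      K * ‖(e.symm : V →L[ℝ] E)‖ * ‖e.symm (F ((newtonMap F F')^[n] x₀))‖ ≤ 1 / 2 ∧
      ‖e.symm (F ((newtonMap F F')^[n] x₀))‖ ≤ ‖e₀.symm (F x₀)‖ * (1 / 2) ^ n := by
  induction n with
  | zero => exact ⟨e₀, he₀, h₀, by simp⟩
  | succ n ih =>
    obtain ⟨e, he, hinv, hδ⟩ := ih
    obtain ⟨e', he', hinv', hδ'⟩ := exists_newton_step_invariant hF hK hlip e he hinv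
    rw [Function.iterate_succ_apply', newtonMap_eq e he]
    exact ⟨e', he', hinv', hδ'.trans (by rw [pow_succ]; linarith)⟩

theorem exists_tendsto_newtonMap_iterate_root [CompleteSpace E] {F : E → V}
    {F' : E → E →L[ℝ] V} (hF : ∀ x, HasFDerivAt F (F' x) x) {K : ℝ} (hK : 0 ≤ K)
    (hlip : ∀ a b, ‖F' a - F' b‖ ≤ K * ‖a - b‖) {x₀ : E} (e₀ : E ≃L[ℝ] V)
    (he₀ : (e₀ : E →L[ℝ] V) = F' x₀)
    (h₀ : K * ‖(e₀.symm : V →L[ℝ] E)‖ * ‖e₀.symm (F x₀)‖ ≤ 1 / 2) :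
    ∃ xs : E, Tendsto (fun n => (newtonMap F F')^[n] x₀) atTop (𝓝 xs) ∧ F xs = 0 := by
  set x := fun n => (newtonMap F F')^[n] x₀
  choose e he _ hδ using exists_newtonMap_iterate_invariant hF hK hlip e₀ he₀ h₀
  have hx : ∀ n, x (n + 1) = x n - (e n).symm (F (x n)) := fun n => by
    simp only [x, Function.iterate_succ_apply', newtonMap_eq (e n) (he n)]
  have hdist : ∀ n, dist (x n) (x (n + 1)) ≤ ‖e₀.symm (F x₀)‖ * (1 / 2) ^ n := fun n => by
    rw [dist_eq_norm, hx, sub_sub_cancel]; exact hδ n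
  obtain ⟨xs, hxs⟩ :=
    cauchySeq_tendsto_of_complete (cauchySeq_of_le_geometric _ _ (by norm_num) hdist)
  refine ⟨xs, hxs, ?_⟩
  -- `F xₙ = F'(xₙ) (xₙ - xₙ₊₁)`, and both factors converge.
  have hFx : ∀ n, F (x n) = F' (x n) (x n - x (n + 1)) := fun n => by
    rw [hx, sub_sub_cancel, ← he]; simp
  have hF'c : Continuous F' :=
    (LipschitzWith.of_dist_le' fun a b => by simpa only [dist_eq_norm] using hlip a b).continuous
  have hFc : Continuous F := continuous_iff_continuousAt.2 fun z => (hF z).continuousAt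
  have hstep : Tendsto (fun n => x n - x (n + 1)) atTop (𝓝 (xs - xs)) :=
    hxs.sub (hxs.comp (tendsto_add_atTop_nat 1))
  have hlim : Tendsto (fun n => F (x n)) atTop (𝓝 (F' xs (xs - xs))) := by
    simp only [hFx]
    exact (isBoundedBilinearMap_apply.continuous.tendsto _).comp
      (((hF'c.tendsto xs).comp hxs).prodMk_nhds hstep)
  rw [sub_self, map_zero] at hlim
  exact tendsto_nhds_unique ((hFc.tendsto xs).comp hxs) hlim

end

theorem stmt_0_general
    {E V : Type*} [NormedAddCommGroup E] [NormedSpace ℝ E] [CompleteSpace E]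
    [NormedAddCommGroup V] [NormedSpace ℝ V]
    (F : E → V) (F' : E → (E →L[ℝ] V)) (F'' : E → (E →L[ℝ] E →L[ℝ] V))
    (hF' : ∀ x, HasFDerivAt F (F' x) x)
    (hF'' : ∀ x, HasFDerivAt F' (F'' x) x)
    (x₀ : E) (e₀ : E ≃L[ℝ] V) (he₀ : (e₀ : E →L[ℝ] V) = F' x₀)
    (K₂ B η : ℝ)
    (hbound : ∀ x, ‖F'' x‖ ≤ K₂)
    (hBinv : ‖(e₀.symm : V →L[ℝ] E)‖ ≤ B)
    (hη' : ‖e₀.symm (F x₀)‖ ≤ η)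
    (hKant : K₂ * B * η ≤ 1 / 2) :
    ∃ x : ℕ → E, x 0 = x₀ ∧
      (∀ n, ∃ e : E ≃L[ℝ] V, (e : E →L[ℝ] V) = F' (x n) ∧
        x (n + 1) = x n - e.symm (F (x n))) ∧
      ∃ xs : E, Filter.Tendsto x Filter.atTop (nhds xs) ∧ F xs = 0 := by
  have hK₂ : 0 ≤ K₂ := (norm_nonneg (F'' x₀)).trans (hbound x₀)
  have hlip : ∀ a b, ‖F' a - F' b‖ ≤ K₂ * ‖a - b‖ := fun a b =>
    convex_univ.norm_image_sub_le_of_norm_hasFDerivWithin_le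
      (fun z _ => (hF'' z).hasFDerivWithinAt) (fun z _ => hbound z)
      (Set.mem_univ b) (Set.mem_univ a)
  have h₀ : K₂ * ‖(e₀.symm : V →L[ℝ] E)‖ * ‖e₀.symm (F x₀)‖ ≤ 1 / 2 :=
    (by gcongr; exact mul_nonneg hK₂ ((norm_nonneg _).trans hBinv) : _ ≤ K₂ * B * η).trans hKant
  refine ⟨fun n => (newtonMap F F')^[n] x₀, rfl, fun n => ?_,
    exists_tendsto_newtonMap_iterate_root hF' hK₂ hlip e₀ he₀ h₀⟩
  obtain ⟨e, he, -⟩ := exists_newtonMap_iterate_invariant hF' hK₂ hlip e₀ he₀ h₀ n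
  exact ⟨e, he, by simp only [Function.iterate_succ_apply', newtonMap_eq e he]⟩

/-- **Kantorovich convergence of Newton's method.**
Let `E`, `V` be real Banach spaces, `F : E → V` twice Fréchet differentiable with
`‖F''(x)‖ ≤ K₂` everywhere, and `x₀ ∈ E` with `F'(x₀)` invertible (with bounded inverse
`e₀.symm`), `‖F'(x₀)⁻¹‖ ≤ B`, `‖F'(x₀)⁻¹ F(x₀)‖ ≤ η`.  If `K₂ B η ≤ 1/2` then the Newton
iteration `x_{n+1} = x_n − F'(x_n)⁻¹ F(x_n)` starting from `x₀` is well defined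
(`F'(x_n)` is invertible for every `n`) and converges to a root `x*` of `F`. -/
theorem stmt_0
    {E V : Type*} [NormedAddCommGroup E] [NormedSpace ℝ E] [CompleteSpace E]
    [NormedAddCommGroup V] [NormedSpace ℝ V] [CompleteSpace V]
    (F : E → V) (F' : E → (E →L[ℝ] V)) (F'' : E → (E →L[ℝ] E →L[ℝ] V))
    (hF' : ∀ x, HasFDerivAt F (F' x) x)
    (hF'' : ∀ x, HasFDerivAt F' (F'' x) x)
    (x₀ : E) (e₀ : E ≃L[ℝ] V) (he₀ : (e₀ : E →L[ℝ] V) = F' x₀)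
    (K₂ B η : ℝ) (hK₂ : 0 < K₂) (hB : 0 < B) (hη : 0 < η)
    (hbound : ∀ x, ‖F'' x‖ ≤ K₂)
    (hBinv : ‖(e₀.symm : V →L[ℝ] E)‖ ≤ B)
    (hη' : ‖e₀.symm (F x₀)‖ ≤ η)
    (hKant : K₂ * B * η ≤ 1 / 2) :
    ∃ x : ℕ → E, x 0 = x₀ ∧
      (∀ n, ∃ e : E ≃L[ℝ] V, (e : E →L[ℝ] V) = F' (x n) ∧
        x (n + 1) = x n - e.symm (F (x n))) ∧
      ∃ xs : E, Filter.Tendsto x Filter.atTop (nhds xs) ∧ F xs = 0 :=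
  stmt_0_general F F' F'' hF' hF'' x₀ e₀ he₀ K₂ B η hbound hBinv hη' hKant
end

section
/- For every real parameter a with 0 < a ≤ 1/2, the system is positive: for all n ≥ 0 one has a_n > 0, d_n > 0 and 1 − a·a_n·d_n > 0 (so every term of both sequences is well defined and positive). -/
/-! The quantity `x_n = a·a_n·d_n` obeys the closed recursion `x_{n+1} = (x_n / (1 - x_n))² / 2`,
and `x ≤ 1/2` forces `|x / (1 - x)| ≤ 1`, hence `x_{n+1} ≤ 1/2`. Starting from `x_0 = a ≤ 1/2`,
the denominators `1 - x_n` therefore stay at least `1/2`, which keeps both sequences positive. -/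

theorem sq_div_one_sub_div_two_le_half {x : ℝ} (hx : x ≤ 1 / 2) :
    (x / (1 - x)) ^ 2 / 2 ≤ 1 / 2 := by
  have hpos : 0 < 1 - x := by linarith
  have hle : |x / (1 - x)| ≤ 1 := by
    rw [abs_div, abs_of_pos hpos, div_le_one hpos, abs_le]
    constructor <;> linarith
  have hsq : (x / (1 - x)) ^ 2 ≤ 1 := (sq_le_one_iff_abs_le_one _).mpr hle
  linarith

section NewtonSystem

variable {a : ℝ} {aa dd : ℕ → ℝ}

theorem newton_invariant_succ
    (haa : ∀ n, aa (n + 1) = aa n / (1 - a * aa n * dd n))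
    (hdd : ∀ n, dd (n + 1) = a / 2 * aa (n + 1) * (dd n) ^ 2) (n : ℕ) :
    a * aa (n + 1) * dd (n + 1) = (a * aa n * dd n / (1 - a * aa n * dd n)) ^ 2 / 2 := by
  rw [hdd n, haa n]
  ring

theorem newton_pos_and_invariant_le_half (ha : 0 < a) (ha' : a ≤ 1 / 2)
    (ha0 : aa 0 = 1) (hd0 : dd 0 = 1)
    (haa : ∀ n, aa (n + 1) = aa n / (1 - a * aa n * dd n))
    (hdd : ∀ n, dd (n + 1) = a / 2 * aa (n + 1) * (dd n) ^ 2) :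
    ∀ n, 0 < aa n ∧ 0 < dd n ∧ a * aa n * dd n ≤ 1 / 2 := by
  intro n
  induction n with
  | zero => simpa [ha0, hd0] using ha'
  | succ n ih =>
    obtain ⟨hA, hD, hx⟩ := ih
    have hA' : 0 < aa (n + 1) := by
      rw [haa n]
      exact div_pos hA (by linarith)
    have hD' : 0 < dd (n + 1) := by
      rw [hdd n]
      positivity
    refine ⟨hA', hD', ?_⟩
    rw [newton_invariant_succ haa hdd n]
    exact sq_div_one_sub_div_two_le_half hx

end NewtonSystem

/-- **Positivity of the Newton system of sequences.**
For `0 < a ≤ 1/2`, the sequences defined by `a₀ = d₀ = 1`,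
`a_{n+1} = a_n/(1 − a·a_n·d_n)`, `d_{n+1} = (a/2)·a_{n+1}·d_n²` satisfy, for all `n`,
`a_n > 0`, `d_n > 0` and `1 − a·a_n·d_n > 0`. -/
theorem stmt_1 (a : ℝ) (ha : 0 < a) (ha' : a ≤ 1 / 2)
    (aa dd : ℕ → ℝ) (ha0 : aa 0 = 1) (hd0 : dd 0 = 1)
    (haa : ∀ n, aa (n + 1) = aa n / (1 - a * aa n * dd n))
    (hdd : ∀ n, dd (n + 1) = a / 2 * aa (n + 1) * (dd n) ^ 2) :
    ∀ n, 0 < aa n ∧ 0 < dd n ∧ 0 < 1 - a * aa n * dd n := by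
  intro n
  obtain ⟨hA, hD, hx⟩ := newton_pos_and_invariant_le_half ha ha' ha0 hd0 haa hdd n
  exact ⟨hA, hD, by linarith⟩
end

section
/- For every real parameter a with 0 < a ≤ 1/2 and every n ≥ 0, the identity (1/a_n)² − 2a·(d_n/a_n) = 1 − 2a holds; in particular a_n is determined by d_n. -/
/-! In the variables `u = 1 / a_n` and `d = d_n` the recursion reads `u ↦ u - a d`,
`d / a_n ↦ (a / 2) d²`, and `u² - 2 a d u` is unchanged by this step: the cross term `a² d²`
produced by squaring cancels. The recursion is well defined because `a_n d_n = 1 / a` would force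
`-(1 / a_n)² = 1 - 2a ≥ 0`. -/

section NewtonInvariant

variable {K : Type*} [Field K]

theorem newton_invariant_step [CharZero K] {a x d : K} (hx : x ≠ 0) (hden : 1 - a * x * d ≠ 0) :
    (1 / (x / (1 - a * x * d))) ^ 2
        - 2 * a * (a / 2 * (x / (1 - a * x * d)) * d ^ 2 / (x / (1 - a * x * d)))
      = (1 / x) ^ 2 - 2 * a * (d / x) := by
  have hrecip : 1 / (x / (1 - a * x * d)) = 1 / x - a * d := by
    rw [one_div_div]
    field_simp
  have hquot : a / 2 * (x / (1 - a * x * d)) * d ^ 2 / (x / (1 - a * x * d)) = a / 2 * d ^ 2 := by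
    rw [mul_right_comm, mul_div_cancel_right₀ _ (div_ne_zero hx hden)]
  rw [hrecip, hquot]
  field_simp
  ring

theorem one_sub_mul_ne_zero_of_invariant [LinearOrder K] [IsStrictOrderedRing K] {a x d : K}
    (ha : a ≤ 1 / 2) (hx : x ≠ 0) (hinv : (1 / x) ^ 2 - 2 * a * (d / x) = 1 - 2 * a) :
    1 - a * x * d ≠ 0 := by
  intro hden
  have hcross : 2 * a * (d / x) = 2 * (1 / x) ^ 2 := by
    field_simp
    linear_combination -hden
  have hpos : 0 < (1 / x) ^ 2 := by positivity
  linarith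

end NewtonInvariant

theorem stmt_2_general (a : ℝ) (ha' : a ≤ 1 / 2)
    (aa dd : ℕ → ℝ) (ha0 : aa 0 = 1) (hd0 : dd 0 = 1)
    (haa : ∀ n, aa (n + 1) = aa n / (1 - a * aa n * dd n))
    (hdd : ∀ n, dd (n + 1) = a / 2 * aa (n + 1) * (dd n) ^ 2) :
    ∀ n, (1 / aa n) ^ 2 - 2 * a * (dd n / aa n) = 1 - 2 * a := by
  suffices h : ∀ n, aa n ≠ 0 ∧ (1 / aa n) ^ 2 - 2 * a * (dd n / aa n) = 1 - 2 * a from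
    fun n ↦ (h n).2
  intro n
  induction n with
  | zero => simp [ha0, hd0]
  | succ n ih =>
    obtain ⟨hne, hinv⟩ := ih
    have hden := one_sub_mul_ne_zero_of_invariant ha' hne hinv
    rw [hdd n, haa n, newton_invariant_step hne hden]
    exact ⟨div_ne_zero hne hden, hinv⟩

/-- **Invariant of the Newton system of sequences.**
For `0 < a ≤ 1/2` and the sequences `a₀ = d₀ = 1`,
`a_{n+1} = a_n/(1 − a·a_n·d_n)`, `d_{n+1} = (a/2)·a_{n+1}·d_n²`, one has, for all `n`,
`(1/a_n)² − 2a·(d_n/a_n) = 1 − 2a`. -/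
theorem stmt_2 (a : ℝ) (ha : 0 < a) (ha' : a ≤ 1 / 2)
    (aa dd : ℕ → ℝ) (ha0 : aa 0 = 1) (hd0 : dd 0 = 1)
    (haa : ∀ n, aa (n + 1) = aa n / (1 - a * aa n * dd n))
    (hdd : ∀ n, dd (n + 1) = a / 2 * aa (n + 1) * (dd n) ^ 2) :
    ∀ n, (1 / aa n) ^ 2 - 2 * a * (dd n / aa n) = 1 - 2 * a :=
  stmt_2_general a ha' aa dd ha0 hd0 haa hdd
end

section
/- For every real parameter a with 0 < a ≤ 1/2 and every n ≥ 0, the successive terms of the sequence (d_n) satisfy the rate-of-convergence relation d_{n+1}·( a·d_{n+1} + √( (a·d_{n+1})² + (1 − 2a) ) ) = (a/2)·d_n². -/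
/-
Along the recursion the pair `(A, D) = (a_n, d_n)` keeps the invariant `1 - 2a·A·D = (1 - 2a)·A²`,
which holds at `(1, 1)`. It says precisely that `(a·D)² + (1 - 2a) = ((1 - a·A·D)/A)²`, and the base
`(1 - a·A·D)/A` is nonnegative, so the square root in the statement equals it. The left-hand side then
collapses to `d_{n+1}/a_{n+1}`, which is `(a/2)·d_n²` by the definition of `d_{n+1}`.
-/

namespace NewtonSystem

variable {a A D : ℝ}

lemma mul_mul_le_half (ha : a ≤ 1 / 2) (hinv : 1 - 2 * a * A * D = (1 - 2 * a) * A ^ 2) :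
    a * A * D ≤ 1 / 2 := by
  nlinarith [sq_nonneg A]

lemma invariant_succ (hc : 1 - a * A * D ≠ 0) (hinv : 1 - 2 * a * A * D = (1 - 2 * a) * A ^ 2) :
    1 - 2 * a * (A / (1 - a * A * D)) * (a / 2 * (A / (1 - a * A * D)) * D ^ 2) =
      (1 - 2 * a) * (A / (1 - a * A * D)) ^ 2 := by
  field_simp
  linear_combination hinv

lemma sqrt_sq_add_eq (ha : a ≤ 1 / 2) (hA : 0 < A)
    (hinv : 1 - 2 * a * A * D = (1 - 2 * a) * A ^ 2) :
    √((a * D) ^ 2 + (1 - 2 * a)) = (1 - a * A * D) / A := by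
  have hbase : 0 ≤ (1 - a * A * D) / A := div_nonneg (by linarith [mul_mul_le_half ha hinv]) hA.le
  rw [← Real.sqrt_sq hbase]
  congr 1
  field_simp
  linear_combination -hinv

end NewtonSystem

open NewtonSystem in
theorem stmt_3_general (a : ℝ) (ha' : a ≤ 1 / 2)
    (aa dd : ℕ → ℝ) (ha0 : aa 0 = 1) (hd0 : dd 0 = 1)
    (haa : ∀ n, aa (n + 1) = aa n / (1 - a * aa n * dd n))
    (hdd : ∀ n, dd (n + 1) = a / 2 * aa (n + 1) * (dd n) ^ 2) :
    ∀ n, dd (n + 1) *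
        (a * dd (n + 1) + Real.sqrt ((a * dd (n + 1)) ^ 2 + (1 - 2 * a))) =
      a / 2 * (dd n) ^ 2 := by
  have key : ∀ n, 0 < aa n ∧ 1 - 2 * a * aa n * dd n = (1 - 2 * a) * aa n ^ 2 := by
    intro n
    induction n with
    | zero => exact ⟨by simp [ha0], by simp [ha0, hd0]⟩
    | succ n ih =>
      obtain ⟨hA, hinv⟩ := ih
      have hc : 0 < 1 - a * aa n * dd n := by linarith [mul_mul_le_half ha' hinv]
      rw [hdd n, haa n]
      exact ⟨div_pos hA hc, invariant_succ hc.ne' hinv⟩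
  intro n
  obtain ⟨hA, hinv⟩ := key (n + 1)
  rw [sqrt_sq_add_eq ha' hA hinv, hdd n]
  field_simp
  ring

/-- **Rate of convergence of the Newton system of sequences.**
For `0 < a ≤ 1/2` and the sequences `a₀ = d₀ = 1`,
`a_{n+1} = a_n/(1 − a·a_n·d_n)`, `d_{n+1} = (a/2)·a_{n+1}·d_n²`, one has, for all `n`,
`d_{n+1}·( a·d_{n+1} + √((a·d_{n+1})² + (1 − 2a)) ) = (a/2)·d_n²`. -/
theorem stmt_3 (a : ℝ) (ha : 0 < a) (ha' : a ≤ 1 / 2)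
    (aa dd : ℕ → ℝ) (ha0 : aa 0 = 1) (hd0 : dd 0 = 1)
    (haa : ∀ n, aa (n + 1) = aa n / (1 - a * aa n * dd n))
    (hdd : ∀ n, dd (n + 1) = a / 2 * aa (n + 1) * (dd n) ^ 2) :
    ∀ n, dd (n + 1) *
        (a * dd (n + 1) + Real.sqrt ((a * dd (n + 1)) ^ 2 + (1 - 2 * a))) =
      a / 2 * (dd n) ^ 2 :=
  stmt_3_general a ha' aa dd ha0 hd0 haa hdd
end

section
/- For every real parameter a with 0 < a ≤ 1/2, the series ∑_{n=0}^∞ d_n converges and its sum equals s* = (1 − √(1 − 2a))/a. -/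
/-!
With `sₙ = d₀ + ⋯ + d_{n-1}` and `f(s) = a s²/2 − s + 1` one has `aₙ = 1/(1 − a sₙ)` and
`dₙ = f(sₙ)/(1 − a sₙ) = −f(sₙ)/f'(sₙ)`: the partial sums are the Newton iterates of `f`
started at `0`. They increase to the smaller root `s* = (1 − √(1 − 2a))/a` of `f`, and since
`a s* ≤ 1` the error `s* − sₙ` at least halves at every step.
-/

open Filter Topology

namespace NewtonQuadratic

noncomputable section

def poly (a s : ℝ) : ℝ := a / 2 * s ^ 2 - s + 1

def step (a s : ℝ) : ℝ := s + poly a s / (1 - a * s)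

def orbit (a : ℝ) : ℕ → ℝ
  | 0 => 0
  | n + 1 => step a (orbit a n)

def root (a : ℝ) : ℝ := (1 - √(1 - 2 * a)) / a

end

@[simp] theorem orbit_zero (a : ℝ) : orbit a 0 = 0 := rfl

theorem orbit_succ (a : ℝ) (n : ℕ) : orbit a (n + 1) = step a (orbit a n) := rfl

theorem poly_root {a : ℝ} (ha : 0 < a) (ha' : a ≤ 1 / 2) : poly a (root a) = 0 := by
  have hq : √(1 - 2 * a) ^ 2 = 1 - 2 * a := Real.sq_sqrt (by linarith)
  unfold poly root
  generalize √(1 - 2 * a) = q at hq ⊢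
  field_simp
  linear_combination hq

theorem mul_root_le_one {a : ℝ} (ha : 0 < a) : a * root a ≤ 1 := by
  rw [root, mul_div_cancel₀ _ ha.ne']
  linarith [Real.sqrt_nonneg (1 - 2 * a)]

theorem root_pos {a : ℝ} (ha : 0 < a) : 0 < root a := by
  have : √(1 - 2 * a) < 1 := (Real.sqrt_lt' one_pos).2 (by linarith)
  exact div_pos (by linarith) ha

theorem poly_step {a s : ℝ} (hs : 1 - a * s ≠ 0) :
    poly a (step a s) = a / 2 * (poly a s / (1 - a * s)) ^ 2 := by
  unfold step poly
  field_simp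
  ring

theorem sub_step_eq {a r s : ℝ} (hr : poly a r = 0) (hs : 1 - a * s ≠ 0) :
    r - step a s = a * (r - s) ^ 2 / (2 * (1 - a * s)) := by
  rw [eq_div_iff (mul_ne_zero two_ne_zero hs), step, sub_add_eq_sub_sub, sub_mul, sub_mul,
    div_mul_eq_mul_div, mul_div_assoc, mul_div_cancel_right₀ _ hs]
  unfold poly at hr ⊢
  linear_combination (-2) * hr

section Step

variable {a r s : ℝ} (ha : 0 < a) (hr : poly a r = 0) (har : a * r ≤ 1) (hs : s < r)
include ha hr har hs

theorem step_lt : step a s < r := by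
  have he : 0 < 1 - a * s := by nlinarith
  have hrs : 0 < r - s := sub_pos.2 hs
  have herr : 0 < a * (r - s) ^ 2 / (2 * (1 - a * s)) := by positivity
  linarith [sub_step_eq hr he.ne']

-- `1 - a s = (1 - a r) + a (r - s) ≥ a (r - s)` controls the quadratic error term.
theorem sub_step_le_half : r - step a s ≤ (r - s) / 2 := by
  have hrs : 0 < r - s := sub_pos.2 hs
  have he : a * (r - s) ≤ 1 - a * s := by linarith
  rw [sub_step_eq hr (by nlinarith), div_le_div_iff₀ (by nlinarith) two_pos]
  nlinarith [mul_le_mul_of_nonneg_left he (mul_pos ha hrs).le]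

end Step

section Orbit

variable {a r : ℝ} (ha : 0 < a) (hr : poly a r = 0) (har : a * r ≤ 1) (hr0 : 0 < r)
include ha hr har hr0

theorem orbit_lt (n : ℕ) : orbit a n < r := by
  induction n with
  | zero => exact hr0
  | succ n ih => exact step_lt ha hr har ih

theorem one_sub_mul_orbit_pos (n : ℕ) : 0 < 1 - a * orbit a n := by
  nlinarith [orbit_lt ha hr har hr0 n]

theorem orbit_le_orbit_succ (n : ℕ) : orbit a n ≤ orbit a (n + 1) := by
  have := sub_step_le_half ha hr har (orbit_lt ha hr har hr0 n)
  have := orbit_lt ha hr har hr0 n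
  rw [orbit_succ]
  linarith

theorem sub_orbit_le (n : ℕ) : r - orbit a n ≤ r * (1 / 2) ^ n := by
  induction n with
  | zero => simp
  | succ n ih =>
    calc r - orbit a (n + 1) ≤ (r - orbit a n) / 2 :=
          sub_step_le_half ha hr har (orbit_lt ha hr har hr0 n)
      _ ≤ r * (1 / 2) ^ (n + 1) := by rw [pow_succ]; linarith

theorem tendsto_orbit : Tendsto (orbit a) atTop (𝓝 r) := by
  have hgeom : Tendsto (fun n : ℕ => r * (1 / 2) ^ n) atTop (𝓝 0) := by
    simpa using (tendsto_pow_atTop_nhds_zero_of_lt_one (by norm_num : (0 : ℝ) ≤ 1 / 2)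
      (by norm_num)).const_mul r
  have herr : Tendsto (fun n => r - orbit a n) atTop (𝓝 0) :=
    squeeze_zero (fun n => (sub_pos.2 (orbit_lt ha hr har hr0 n)).le)
      (sub_orbit_le ha hr har hr0) hgeom
  simpa only [sub_sub_cancel, sub_zero] using (tendsto_const_nhds (x := r)).sub herr

end Orbit

theorem newton_system_eq_orbit {a : ℝ} (aa dd : ℕ → ℝ) (ha0 : aa 0 = 1) (hd0 : dd 0 = 1)
    (haa : ∀ n, aa (n + 1) = aa n / (1 - a * aa n * dd n))
    (hdd : ∀ n, dd (n + 1) = a / 2 * aa (n + 1) * (dd n) ^ 2)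
    (hne : ∀ n, 1 - a * orbit a n ≠ 0) (n : ℕ) :
    aa n = (1 - a * orbit a n)⁻¹ ∧ dd n = poly a (orbit a n) / (1 - a * orbit a n) := by
  induction n with
  | zero => simp [poly, ha0, hd0]
  | succ n ih =>
    obtain ⟨han, hdn⟩ := ih
    have hsucc : 1 - a * orbit a (n + 1) = (1 - a * orbit a n) - a * dd n := by
      rw [orbit_succ, step, hdn]; ring
    have han' : aa (n + 1) = (1 - a * orbit a (n + 1))⁻¹ := by
      rw [haa, han, hsucc]
      field_simp [hne n]
    refine ⟨han', ?_⟩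
    rw [hdd, han', orbit_succ, poly_step (hne n), ← hdn]
    ring

theorem sum_range_eq_orbit {a : ℝ} {dd : ℕ → ℝ} (hd : ∀ n, dd n = orbit a (n + 1) - orbit a n)
    (n : ℕ) : ∑ k ∈ Finset.range n, dd k = orbit a n := by
  rw [Finset.sum_congr rfl fun k _ => hd k, Finset.sum_range_sub, orbit_zero, sub_zero]

end NewtonQuadratic

open NewtonQuadratic in
/-- **Sum of the Newton system sequence `(d_n)`.**
For `0 < a ≤ 1/2` and the sequences `a₀ = d₀ = 1`,
`a_{n+1} = a_n/(1 − a·a_n·d_n)`, `d_{n+1} = (a/2)·a_{n+1}·d_n²`, the series `∑ d_n`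
converges with sum `s* = (1 − √(1 − 2a))/a`. -/
theorem stmt_4 (a : ℝ) (ha : 0 < a) (ha' : a ≤ 1 / 2)
    (aa dd : ℕ → ℝ) (ha0 : aa 0 = 1) (hd0 : dd 0 = 1)
    (haa : ∀ n, aa (n + 1) = aa n / (1 - a * aa n * dd n))
    (hdd : ∀ n, dd (n + 1) = a / 2 * aa (n + 1) * (dd n) ^ 2) :
    HasSum dd ((1 - Real.sqrt (1 - 2 * a)) / a) := by
  change HasSum dd (root a)
  have hr := poly_root ha ha'
  have har := mul_root_le_one ha
  have hr0 := root_pos ha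
  have hne : ∀ n, 1 - a * orbit a n ≠ 0 := fun n => (one_sub_mul_orbit_pos ha hr har hr0 n).ne'
  have hd : ∀ n, dd n = orbit a (n + 1) - orbit a n := fun n => by
    rw [(newton_system_eq_orbit aa dd ha0 hd0 haa hdd hne n).2, orbit_succ, step, add_sub_cancel_left]
  have hnonneg : ∀ n, 0 ≤ dd n := fun n => by
    rw [hd]; exact sub_nonneg.2 (orbit_le_orbit_succ ha hr har hr0 n)
  rw [hasSum_iff_tendsto_nat_of_nonneg hnonneg]
  simpa only [sum_range_eq_orbit hd] using tendsto_orbit ha hr har hr0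
end

section
/- For every real parameter a with 0 < a ≤ 1/2 and every n ≥ 0, the partial sums of the sequence (d_n) satisfy ∑_{k=0}^{n−1} d_k = (1/a)·(1 − 1/a_n). -/
/-!
The quantity `b_n = a·a_n·d_n` obeys `b_{n+1} = b_n² / (2(1 - b_n)²)`, so `b_n ≤ 1/2` propagates from
`b_0 = a ≤ 1/2`; hence `a_n > 0` and `1 - b_n > 0` for all `n`. The recursion for `a_n` then reads
`1/a_{n+1} = 1/a_n - a·d_n`, and the sum of the `d_k` telescopes.
-/

namespace NewtonSystem

variable {a : ℝ} {aa dd : ℕ → ℝ}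

lemma sq_div_two_mul_one_sub_sq_le_half {b : ℝ} (hb : b ≤ 1 / 2) :
    b ^ 2 / (2 * (1 - b) ^ 2) ≤ 1 / 2 := by
  rw [div_le_iff₀ (by nlinarith)]
  nlinarith

lemma mul_succ_eq (haa : ∀ n, aa (n + 1) = aa n / (1 - a * aa n * dd n))
    (hdd : ∀ n, dd (n + 1) = a / 2 * aa (n + 1) * dd n ^ 2) (n : ℕ) :
    a * aa (n + 1) * dd (n + 1) = (a * aa n * dd n) ^ 2 / (2 * (1 - a * aa n * dd n) ^ 2) := by
  rw [hdd, haa]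
  field_simp

lemma pos_and_mul_le_half (ha' : a ≤ 1 / 2) (ha0 : aa 0 = 1) (hd0 : dd 0 = 1)
    (haa : ∀ n, aa (n + 1) = aa n / (1 - a * aa n * dd n))
    (hdd : ∀ n, dd (n + 1) = a / 2 * aa (n + 1) * dd n ^ 2) :
    ∀ n, 0 < aa n ∧ a * aa n * dd n ≤ 1 / 2 := by
  intro n
  induction n with
  | zero =>
    rw [ha0, hd0, mul_one, mul_one]
    exact ⟨one_pos, ha'⟩
  | succ n ih =>
    obtain ⟨haa_pos, hle⟩ := ih
    have hden : 0 < 1 - a * aa n * dd n := by linarith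
    refine ⟨by rw [haa]; positivity, ?_⟩
    rw [mul_succ_eq haa hdd]
    exact sq_div_two_mul_one_sub_sq_le_half hle

lemma one_div_succ (haa : ∀ n, aa (n + 1) = aa n / (1 - a * aa n * dd n)) {n : ℕ}
    (hn : aa n ≠ 0) : 1 / aa (n + 1) = 1 / aa n - a * dd n := by
  rw [haa, one_div_div]
  field_simp

lemma sum_eq_of_one_div_succ (ha : a ≠ 0) (ha0 : aa 0 = 1)
    (h : ∀ n, 1 / aa (n + 1) = 1 / aa n - a * dd n) (n : ℕ) :
    ∑ k ∈ Finset.range n, dd k = 1 / a * (1 - 1 / aa n) := by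
  have hdd : ∀ k, dd k = 1 / a * (1 / aa k - 1 / aa (k + 1)) := by
    intro k
    rw [h]
    field_simp
    ring
  rw [Finset.sum_congr rfl fun k _ => hdd k, ← Finset.mul_sum, Finset.sum_range_sub', ha0, div_one]

end NewtonSystem

open NewtonSystem in
/-- **Partial sums of the Newton system sequence `(d_n)`.**
For `0 < a ≤ 1/2` and the sequences `a₀ = d₀ = 1`,
`a_{n+1} = a_n/(1 − a·a_n·d_n)`, `d_{n+1} = (a/2)·a_{n+1}·d_n²`, the partial sums satisfy
`∑_{k=0}^{n−1} d_k = (1/a)·(1 − 1/a_n)` for every `n ≥ 0`. -/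
theorem stmt_5 (a : ℝ) (ha : 0 < a) (ha' : a ≤ 1 / 2)
    (aa dd : ℕ → ℝ) (ha0 : aa 0 = 1) (hd0 : dd 0 = 1)
    (haa : ∀ n, aa (n + 1) = aa n / (1 - a * aa n * dd n))
    (hdd : ∀ n, dd (n + 1) = a / 2 * aa (n + 1) * (dd n) ^ 2) :
    ∀ n, ∑ k ∈ Finset.range n, dd k = 1 / a * (1 - 1 / aa n) := by
  have haa_pos n := (pos_and_mul_le_half ha' ha0 hd0 haa hdd n).1
  exact sum_eq_of_one_div_succ ha.ne' ha0 fun n => one_div_succ haa (haa_pos n).ne'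
end

section
/- Let 0 < a ≤ 1/2 and let q(s) = (a/2)s² − s + 1 with smallest positive root s* = (1 − √(1 − 2a))/a. The Newton sequence defined by s_0 = 0 and s_{n+1} = s_n − q(s_n)/q'(s_n) is monotonically increasing, converges to s*, and satisfies, for every n ≥ 0, s_{n+1} − s_n = d_n and q'(s_n) = −1/a_n. -/
/-!
Put `u = 1 - a s = -q'(s)` and `b = √(1 - 2a)`. Then `2a q(s) = u² - b²`, so a Newton step on `q`
is the Babylonian step `u ↦ (u² + b²) / (2u)` towards `b`. Started at `u₀ = 1 > b` it decreases
to `b`, at least halving `u - b` each time (linear convergence covers the double root `a = 1/2`),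
and `s* = (1 - b) / a`. Since `q` is quadratic, `q'(s + d) = q'(s) + a d` and
`q(s + d) = q(s) + q'(s) d + (a/2) d²`; after a Newton step the first two terms cancel, so
`q(s_{n+1}) = (a/2) d_n²`, which is the recursion defining `d_{n+1}`.
-/

open Filter Topology

noncomputable def heron (b x : ℝ) : ℝ := (x ^ 2 + b ^ 2) / (2 * x)

section Heron

variable {b x : ℝ}

theorem heron_sub (hx : x ≠ 0) : heron b x - b = (x - b) ^ 2 / (2 * x) := by
  unfold heron
  field_simp
  ring

theorem lt_heron (hb : 0 ≤ b) (hx : b < x) : b < heron b x := by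
  have hx0 : 0 < x := hb.trans_lt hx
  have : 0 < (x - b) ^ 2 / (2 * x) := by
    have : x - b ≠ 0 := sub_ne_zero.mpr hx.ne'
    positivity
  linarith [heron_sub (b := b) hx0.ne']

theorem heron_le_self (hb : 0 ≤ b) (hx : b < x) : heron b x ≤ x := by
  have hx0 : 0 < x := hb.trans_lt hx
  rw [heron, div_le_iff₀ (by positivity)]
  nlinarith

theorem heron_sub_le_half (hb : 0 ≤ b) (hx : b < x) : heron b x - b ≤ (x - b) / 2 := by
  have hx0 : 0 < x := hb.trans_lt hx
  rw [heron_sub hx0.ne', div_le_div_iff₀ (by positivity) two_pos]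
  nlinarith

theorem lt_heron_iterate (hb : 0 ≤ b) (hx : b < x) (n : ℕ) : b < (heron b)^[n] x := by
  induction n with
  | zero => exact hx
  | succ n ih => rw [Function.iterate_succ_apply']; exact lt_heron hb ih

theorem antitone_heron_iterate (hb : 0 ≤ b) (hx : b < x) : Antitone fun n => (heron b)^[n] x :=
  antitone_nat_of_succ_le fun n => by
    rw [Function.iterate_succ_apply']
    exact heron_le_self hb (lt_heron_iterate hb hx n)

theorem heron_iterate_sub_le (hb : 0 ≤ b) (hx : b < x) (n : ℕ) :
    (heron b)^[n] x - b ≤ (x - b) * (1 / 2) ^ n := by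
  induction n with
  | zero => simp
  | succ n ih =>
    rw [Function.iterate_succ_apply', pow_succ]
    linarith [heron_sub_le_half hb (lt_heron_iterate hb hx n)]

theorem tendsto_heron_iterate (hb : 0 ≤ b) (hx : b < x) :
    Tendsto (fun n => (heron b)^[n] x) atTop (𝓝 b) := by
  have hgeom : Tendsto (fun n : ℕ => b + (x - b) * (1 / 2) ^ n) atTop (𝓝 b) := by
    have := tendsto_pow_atTop_nhds_zero_of_lt_one (r := (1 / 2 : ℝ)) (by norm_num) (by norm_num)
    simpa using (this.const_mul (x - b)).const_add b
  refine tendsto_of_tendsto_of_tendsto_of_le_of_le tendsto_const_nhds hgeom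
    (fun n => (lt_heron_iterate hb hx n).le) fun n => ?_
  linarith [heron_iterate_sub_le hb hx n]

end Heron

section AdimensionalQuadratic

variable {a : ℝ}

theorem deriv_adimensional_quadratic :
    deriv (fun s : ℝ => a / 2 * s ^ 2 - s + 1) = fun s => a * s - 1 := by
  funext x
  have h := (((hasDerivAt_pow 2 x).const_mul (a / 2)).sub (hasDerivAt_id x)).add_const 1
  exact h.deriv.trans (by simp; ring)

theorem one_sub_mul_newton_step {b s : ℝ} (hb : b ^ 2 = 1 - 2 * a) (hs : a * s - 1 ≠ 0) :
    1 - a * (s - (a / 2 * s ^ 2 - s + 1) / (a * s - 1)) = heron b (1 - a * s) := by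
  have : 1 - a * s ≠ 0 := fun h => hs (by linarith)
  unfold heron
  field_simp
  linear_combination (1 - a * s) * hb

theorem newton_sub_eq_and_deriv_eq_of_newtonSystem (aa dd s : ℕ → ℝ) (ha0 : aa 0 = 1)
    (hd0 : dd 0 = 1)
    (haa : ∀ n, aa (n + 1) = aa n / (1 - a * aa n * dd n))
    (hdd : ∀ n, dd (n + 1) = a / 2 * aa (n + 1) * (dd n) ^ 2) (hs0 : s 0 = 0)
    (hs : ∀ n, s (n + 1) = s n - (a / 2 * s n ^ 2 - s n + 1) / (a * s n - 1))
    (hne : ∀ n, a * s n - 1 ≠ 0) (n : ℕ) :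
    s (n + 1) - s n = dd n ∧ a * s n - 1 = -(1 / aa n) := by
  induction n with
  | zero => simp [hs, hs0, ha0, hd0]
  | succ n ih =>
    obtain ⟨hd, hq'⟩ := ih
    have hd' : a * s (n + 1) - 1 = a * s n - 1 + a * dd n := by linear_combination a * hd
    -- Taylor expansion at `s n`: the Newton step kills the constant and linear terms.
    have hq : a / 2 * s (n + 1) ^ 2 - s (n + 1) + 1 = a / 2 * dd n ^ 2 := by
      rw [← hd, hs n]
      field_simp [hne n]
      ring
    have haa' : a * s (n + 1) - 1 = -(1 / aa (n + 1)) := by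
      have : aa n ≠ 0 := by rintro h; simp [h] at hq'; exact hne n hq'
      rw [haa n, hd', hq']
      field_simp
      ring
    refine ⟨?_, haa'⟩
    have haa_succ : aa (n + 1) = -(a * s (n + 1) - 1)⁻¹ := by rw [haa']; simp
    rw [hs (n + 1), hq, hdd n, haa_succ]
    field_simp [hne (n + 1)]
    ring

end AdimensionalQuadratic

/-- **Newton's method on the adimensional quadratic.**
Let `0 < a ≤ 1/2`, `q(s) = (a/2)s² − s + 1` with smallest positive root
`s* = (1 − √(1 − 2a))/a`.  The Newton sequence `s₀ = 0`, `s_{n+1} = s_n − q(s_n)/q'(s_n)` is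
monotonically increasing, converges to `s*`, and satisfies `s_{n+1} − s_n = d_n` and
`q'(s_n) = −1/a_n` for every `n`, where `(a_n)`, `(d_n)` is the Newton system of sequences. -/
theorem stmt_6 (a : ℝ) (ha : 0 < a) (ha' : a ≤ 1 / 2)
    (aa dd : ℕ → ℝ) (ha0 : aa 0 = 1) (hd0 : dd 0 = 1)
    (haa : ∀ n, aa (n + 1) = aa n / (1 - a * aa n * dd n))
    (hdd : ∀ n, dd (n + 1) = a / 2 * aa (n + 1) * (dd n) ^ 2)
    (q : ℝ → ℝ) (hq : q = fun s => a / 2 * s ^ 2 - s + 1)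
    (sstar : ℝ) (hsstar : sstar = (1 - Real.sqrt (1 - 2 * a)) / a)
    (s : ℕ → ℝ) (hs0 : s 0 = 0)
    (hsn : ∀ n, s (n + 1) = s n - q (s n) / deriv q (s n)) :
    Monotone s ∧ Filter.Tendsto s Filter.atTop (nhds sstar) ∧
      ∀ n, s (n + 1) - s n = dd n ∧ deriv q (s n) = -(1 / aa n) := by
  subst hq hsstar
  simp only [deriv_adimensional_quadratic] at hsn ⊢
  set b := Real.sqrt (1 - 2 * a)
  have hb : 0 ≤ b := Real.sqrt_nonneg _
  have hb2 : b ^ 2 = 1 - 2 * a := Real.sq_sqrt (by linarith)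
  have hb1 : b < 1 := by nlinarith
  have hu : ∀ n, 1 - a * s n = (heron b)^[n] 1 := by
    intro n
    induction n with
    | zero => simp [hs0]
    | succ n ih =>
      have hne : a * s n - 1 ≠ 0 := fun h => by linarith [lt_heron_iterate hb hb1 n]
      rw [hsn, one_sub_mul_newton_step hb2 hne, ih, Function.iterate_succ_apply']
  have hs : ∀ n, s n = (1 - (heron b)^[n] 1) / a := fun n => by
    rw [← hu]
    field_simp
    ring
  refine ⟨fun m n hmn => ?_, ?_,
    newton_sub_eq_and_deriv_eq_of_newtonSystem aa dd s ha0 hd0 haa hdd hs0 hsn fun n => ?_⟩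
  · rw [hs, hs]
    gcongr
    exact antitone_heron_iterate hb hb1 hmn
  · rw [funext hs]
    exact ((tendsto_heron_iterate hb hb1).const_sub 1).div_const a
  · linarith [lt_heron_iterate hb hb1 n, hu n]
end

section
/- Let E and V be real Banach spaces and F : E → V twice Fréchet differentiable. Let x₀ ∈ E be such that F'(x₀) is invertible, and let K₂, B, η > 0 satisfy: a := K₂Bη ≤ 1/2, ‖F''(x)‖ ≤ K₂ for all x ∈ E, ‖F'(x₀)⁻¹‖ ≤ B, and ‖F'(x₀)⁻¹F(x₀)‖ ≤ η. Then the Newton sequence x_{n+1} = x_n − F'(x_n)⁻¹F(x_n) is well defined and converges to a root x* of F, and for all n ≥ 0: (1) F'(x_n) is invertible with ‖F'(x_n)⁻¹‖ ≤ a_n·B; (2) ‖x_{n+1} − x_n‖ ≤ d_n·η; (3) ‖x* − x₀‖ ≤ s*·η; (4) for n ≥ 1, ‖x* − x_n‖ ≤ (s* − ∑_{k=0}^{n−1} d_k)·η. Moreover, x* is the only root of F in the ball of center x₀ and radius s**·η. -/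
/-!
Kantorovich's majorant argument. The partial sums `t_n = ∑_{k<n} d_k` are the Newton iterates of
the scalar polynomial `q` started at `0`, and they increase to its smallest root `s*`. By induction,
`a_n B` bounds `‖F'(x_n)⁻¹‖` and `d_n η` bounds `‖x_{n+1} - x_n‖`: Taylor's formula gives
`‖F(x_{n+1})‖ ≤ K₂/2 ‖x_{n+1} - x_n‖²`, and a Neumann series controls the inverse of the perturbed
derivative `F'(x_{n+1})`. So `(x_n)` is Cauchy with tails bounded by `(s* - t_n) η`. For uniqueness,
a Newton step from `x_n` squares the normalised distance `‖z - x_n‖ / ((s** - t_n) η)` to any root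
`z`, which therefore tends to `0` once it starts below `1`.
-/

open Filter Topology Finset

section

variable {E V : Type*} [NormedAddCommGroup E] [NormedAddCommGroup V]

theorem exists_tendsto_norm_sub_le_of_hasSum [CompleteSpace E] {x : ℕ → E} {d : ℕ → ℝ} {s : ℝ}
    (hd : HasSum d s) (hx : ∀ n, ‖x (n + 1) - x n‖ ≤ d n) :
    ∃ xs, Tendsto x atTop (𝓝 xs) ∧ ∀ n, ‖xs - x n‖ ≤ s - ∑ k ∈ range n, d k := by
  have hdist (n : ℕ) : dist (x n) (x n.succ) ≤ d n := by rw [dist_comm, dist_eq_norm]; exact hx n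
  obtain ⟨xs, hxs⟩ :=
    cauchySeq_tendsto_of_complete (cauchySeq_of_dist_le_of_summable d hdist hd.summable)
  refine ⟨xs, hxs, fun n => ?_⟩
  have htail : ∑' m, d (n + m) = s - ∑ k ∈ range n, d k := by
    simpa only [add_comm] using ((hasSum_nat_add_iff' n).2 hd).tsum_eq
  rw [← dist_eq_norm, dist_comm, ← htail]
  exact dist_le_tsum_of_dist_le_of_tendsto d hdist hd.summable hxs n

section Perturbation

variable {𝕜 : Type*} [NontriviallyNormedField 𝕜] [NormedSpace 𝕜 E] [NormedSpace 𝕜 V]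
  [CompleteSpace E]

theorem ContinuousLinearEquiv.exists_coe_eq_of_norm_sub_le (e : E ≃L[𝕜] V) (L : E →L[𝕜] V)
    {β δ : ℝ} (he : ‖(e.symm : V →L[𝕜] E)‖ ≤ β) (hL : ‖L - (e : E →L[𝕜] V)‖ ≤ δ)
    (hβδ : β * δ < 1) :
    ∃ e' : E ≃L[𝕜] V, (e' : E →L[𝕜] V) = L ∧ ‖(e'.symm : V →L[𝕜] E)‖ ≤ β / (1 - β * δ) := by
  set w : E →L[𝕜] E := -((e.symm : V →L[𝕜] E).comp (L - (e : E →L[𝕜] V)))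
  have hw : ‖w‖ ≤ β * δ := by
    rw [norm_neg]
    exact (ContinuousLinearMap.opNorm_comp_le _ _).trans
      (mul_le_mul he hL (norm_nonneg _) ((norm_nonneg _).trans he))
  set U := Units.oneSub w (hw.trans_lt hβδ)
  refine ⟨(ContinuousLinearEquiv.unitsEquiv 𝕜 E U).trans e, ?_, ?_⟩
  · ext v
    simp [U, w]
  · have hU : ‖((U⁻¹ : (E →L[𝕜] E)ˣ) : E →L[𝕜] E)‖ ≤ (1 - ‖w‖)⁻¹ := by
      have h1 : ‖(1 : E →L[𝕜] E)‖ ≤ 1 := ContinuousLinearMap.norm_id_le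
      have := tsum_geometric_le_of_norm_lt_one w (hw.trans_lt hβδ)
      exact this.trans (by linarith)
    have hβ : 0 ≤ β := (norm_nonneg _).trans he
    calc ‖(((ContinuousLinearEquiv.unitsEquiv 𝕜 E U).trans e).symm : V →L[𝕜] E)‖
        = ‖((U⁻¹ : (E →L[𝕜] E)ˣ) : E →L[𝕜] E).comp (e.symm : V →L[𝕜] E)‖ := rfl
      _ ≤ (1 - ‖w‖)⁻¹ * β := (ContinuousLinearMap.opNorm_comp_le _ _).trans
          (mul_le_mul hU he (norm_nonneg _) (inv_nonneg.2 (by linarith)))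
      _ ≤ β / (1 - β * δ) := by
          rw [inv_mul_eq_div]
          exact div_le_div_of_nonneg_left hβ (by linarith) (by linarith)

end Perturbation

section Newton

variable [NormedSpace ℝ E] [NormedSpace ℝ V]

noncomputable def newtonSeq (F : E → V) (F' : E → E →L[ℝ] V) (x₀ : E) : ℕ → E
  | 0 => x₀
  | n + 1 => newtonSeq F F' x₀ n - (F' (newtonSeq F F' x₀ n)).inverse (F (newtonSeq F F' x₀ n))

variable {F : E → V} {F' : E → E →L[ℝ] V} {K : ℝ}

theorem norm_image_sub_sub_fderiv_le (hF : ∀ x, HasFDerivAt F (F' x) x)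
    (hLip : ∀ u v, ‖F' v - F' u‖ ≤ K * ‖v - u‖) (x y : E) :
    ‖F y - F x - F' x (y - x)‖ ≤ K / 2 * ‖y - x‖ ^ 2 := by
  set v := y - x
  set g : ℝ → V := fun t => F (x + t • v) - t • F' x v - F x
  have hg (t : ℝ) : HasDerivAt g (F' (x + t • v) v - F' x v) t := by
    have hline : HasDerivAt (fun t : ℝ => x + t • v) v t := by
      simpa using ((hasDerivAt_id t).smul_const v).const_add x
    have hlin : HasDerivAt (fun t : ℝ => t • F' x v) (F' x v) t := by
      simpa using (hasDerivAt_id t).smul_const (F' x v)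
    exact (((hF _).comp_hasDerivAt t hline).sub hlin).sub_const (F x)
  have hg' (t : ℝ) (ht : t ∈ Set.Ico (0 : ℝ) 1) :
      ‖F' (x + t • v) v - F' x v‖ ≤ K / 2 * ‖v‖ ^ 2 * (2 * t) := by
    calc ‖F' (x + t • v) v - F' x v‖ = ‖(F' (x + t • v) - F' x) v‖ := rfl
      _ ≤ ‖F' (x + t • v) - F' x‖ * ‖v‖ := ContinuousLinearMap.le_opNorm _ _
      _ ≤ K * (t * ‖v‖) * ‖v‖ := by
          gcongr
          simpa [norm_smul, abs_of_nonneg ht.1] using hLip x (x + t • v)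
      _ = K / 2 * ‖v‖ ^ 2 * (2 * t) := by ring
  have key := image_norm_le_of_norm_deriv_right_le_deriv_boundary
    (fun t _ => (hg t).continuousAt.continuousWithinAt) (fun t _ => (hg t).hasDerivWithinAt)
    (B := fun t => K / 2 * ‖v‖ ^ 2 * t ^ 2) (by simp [g])
    (fun t => by simpa using (hasDerivAt_pow 2 t).const_mul (K / 2 * ‖v‖ ^ 2)) hg'
    (Set.right_mem_Icc.2 zero_le_one)
  simpa [g, v, sub_right_comm _ (F x)] using key

theorem norm_image_newtonStep_le (hF : ∀ x, HasFDerivAt F (F' x) x)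
    (hLip : ∀ u v, ‖F' v - F' u‖ ≤ K * ‖v - u‖) {x y : E} {e : E ≃L[ℝ] V}
    (he : (e : E →L[ℝ] V) = F' x) (hy : y = x - e.symm (F x)) :
    ‖F y‖ ≤ K / 2 * ‖y - x‖ ^ 2 := by
  have hlin : F' x (y - x) = -F x := by simp [hy, ← he]
  simpa [hlin] using norm_image_sub_sub_fderiv_le hF hLip x y

theorem norm_root_sub_newtonStep_le (hF : ∀ x, HasFDerivAt F (F' x) x)
    (hLip : ∀ u v, ‖F' v - F' u‖ ≤ K * ‖v - u‖) {x y z : E} {e : E ≃L[ℝ] V}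
    (he : (e : E →L[ℝ] V) = F' x) (hy : y = x - e.symm (F x)) (hz : F z = 0) :
    ‖z - y‖ ≤ ‖(e.symm : V →L[ℝ] E)‖ * (K / 2 * ‖z - x‖ ^ 2) := by
  have hzy : z - y = -e.symm (F z - F x - F' x (z - x)) := by
    rw [hy, hz, ← he]
    simp only [ContinuousLinearEquiv.coe_coe, map_sub, map_zero,
      ContinuousLinearEquiv.symm_apply_apply]
    abel
  rw [hzy, norm_neg]
  exact ((e.symm : V →L[ℝ] E).le_opNorm _).trans
    (by gcongr; exact norm_image_sub_sub_fderiv_le hF hLip x z)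

theorem image_eq_zero_of_tendsto_newton (hF : ∀ x, HasFDerivAt F (F' x) x)
    (hLip : ∀ u v, ‖F' v - F' u‖ ≤ K * ‖v - u‖) {x : ℕ → E} {e : ℕ → E ≃L[ℝ] V}
    (he : ∀ n, (e n : E →L[ℝ] V) = F' (x n)) (hx : ∀ n, x (n + 1) = x n - (e n).symm (F (x n)))
    {xs : E} (hlim : Tendsto x atTop (𝓝 xs)) : F xs = 0 := by
  have hsucc := hlim.comp (tendsto_add_atTop_nat 1)
  have hstep : Tendsto (fun n => K / 2 * ‖x (n + 1) - x n‖ ^ 2) atTop (𝓝 0) := by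
    simpa using ((hsucc.sub hlim).norm.pow 2).const_mul (K / 2)
  have hF0 : Tendsto (fun n => F (x (n + 1))) atTop (𝓝 0) :=
    squeeze_zero_norm (fun n => norm_image_newtonStep_le hF hLip (he n) (hx n)) hstep
  exact tendsto_nhds_unique ((hF xs).continuousAt.tendsto.comp hsucc) hF0

theorem newtonSeq_succ {x₀ : E} {n : ℕ} {e : E ≃L[ℝ] V}
    (he : (e : E →L[ℝ] V) = F' (newtonSeq F F' x₀ n)) :
    newtonSeq F F' x₀ (n + 1) = newtonSeq F F' x₀ n - e.symm (F (newtonSeq F F' x₀ n)) := by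
  rw [newtonSeq, ← he, ContinuousLinearMap.inverse_equiv]
  rfl

theorem newtonSeq_majorized [CompleteSpace E] (hF : ∀ x, HasFDerivAt F (F' x) x)
    (hLip : ∀ u v, ‖F' v - F' u‖ ≤ K * ‖v - u‖) (hK : 0 ≤ K) {x₀ : E} {e₀ : E ≃L[ℝ] V}
    (he₀ : (e₀ : E →L[ℝ] V) = F' x₀) {β δ : ℕ → ℝ} (hβ₀ : ‖(e₀.symm : V →L[ℝ] E)‖ ≤ β 0)
    (hδ₀ : ‖e₀.symm (F x₀)‖ ≤ δ 0) (hβδ : ∀ n, β n * (K * δ n) < 1)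
    (hβ : ∀ n, β (n + 1) = β n / (1 - β n * (K * δ n)))
    (hδ : ∀ n, δ (n + 1) = β (n + 1) * (K / 2 * δ n ^ 2)) (n : ℕ) :
    ∃ e : E ≃L[ℝ] V, (e : E →L[ℝ] V) = F' (newtonSeq F F' x₀ n) ∧
      ‖(e.symm : V →L[ℝ] E)‖ ≤ β n ∧ ‖newtonSeq F F' x₀ (n + 1) - newtonSeq F F' x₀ n‖ ≤ δ n := by
  induction n with
  | zero =>
    refine ⟨e₀, he₀, hβ₀, ?_⟩
    rwa [newtonSeq_succ he₀, sub_sub_cancel_left, norm_neg]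
  | succ n ih =>
    obtain ⟨e, he, heβ, hstep⟩ := ih
    set x := newtonSeq F F' x₀
    have hFx : ‖F (x (n + 1))‖ ≤ K / 2 * δ n ^ 2 :=
      (norm_image_newtonStep_le hF hLip he (newtonSeq_succ he)).trans (by gcongr)
    have hF'x : ‖F' (x (n + 1)) - (e : E →L[ℝ] V)‖ ≤ K * δ n := by
      rw [he]
      exact (hLip _ _).trans (by gcongr)
    obtain ⟨e', he', he'β⟩ := e.exists_coe_eq_of_norm_sub_le _ heβ hF'x (hβδ n)
    rw [← hβ] at he'β
    have hnext : x (n + 2) = x (n + 1) - e'.symm (F (x (n + 1))) := newtonSeq_succ he'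
    refine ⟨e', he', he'β, ?_⟩
    rw [hnext, sub_sub_cancel_left, norm_neg, hδ]
    exact ((e'.symm : V →L[ℝ] E).le_opNorm _).trans
      (mul_le_mul he'β hFx (norm_nonneg _) ((norm_nonneg _).trans he'β))

theorem tendsto_root_of_newton (hF : ∀ x, HasFDerivAt F (F' x) x)
    (hLip : ∀ u v, ‖F' v - F' u‖ ≤ K * ‖v - u‖) (hK : 0 ≤ K) {x : ℕ → E} {e : ℕ → E ≃L[ℝ] V}
    (he : ∀ n, (e n : E →L[ℝ] V) = F' (x n)) (hx : ∀ n, x (n + 1) = x n - (e n).symm (F (x n)))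
    {β w : ℕ → ℝ} (heβ : ∀ n, ‖((e n).symm : V →L[ℝ] E)‖ ≤ β n)
    (hw : ∀ n, β n * (K / 2 * w n ^ 2) = w (n + 1)) (hw_le : ∀ n, w n ≤ w 0)
    {z : E} (hz : F z = 0) (hz₀ : ‖z - x 0‖ < w 0) : Tendsto x atTop (𝓝 z) := by
  have hw₀ : 0 < w 0 := (norm_nonneg _).trans_lt hz₀
  set ρ := ‖z - x 0‖ / w 0
  have hρ₀ : 0 ≤ ρ := by positivity
  have hρ₁ : ρ < 1 := (div_lt_one hw₀).2 hz₀
  have hquad (n : ℕ) : ‖z - x n‖ ≤ ρ ^ 2 ^ n * w n := by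
    induction n with
    | zero => simp [ρ, div_mul_cancel₀ _ hw₀.ne']
    | succ n ih =>
      calc ‖z - x (n + 1)‖ ≤ β n * (K / 2 * ‖z - x n‖ ^ 2) :=
            (norm_root_sub_newtonStep_le hF hLip (he n) (hx n) hz).trans
              (by gcongr; exact heβ n)
        _ ≤ β n * (K / 2 * (ρ ^ 2 ^ n * w n) ^ 2) := by
            have := (norm_nonneg _).trans (heβ n)
            gcongr
        _ = ρ ^ 2 ^ (n + 1) * w (n + 1) := by rw [← hw, pow_succ 2 n, pow_mul]; ring
  have hρpow : Tendsto (fun n => ρ ^ 2 ^ n * w 0) atTop (𝓝 0) := by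
    simpa using ((tendsto_pow_atTop_nhds_zero_of_lt_one hρ₀ hρ₁).comp
      (tendsto_pow_atTop_atTop_of_one_lt one_lt_two)).mul_const (w 0)
  rw [tendsto_iff_norm_sub_tendsto_zero]
  refine squeeze_zero (fun n => norm_nonneg _) (fun n => ?_) hρpow
  rw [norm_sub_rev]
  exact (hquad n).trans (by gcongr; exact hw_le n)

end Newton

end

namespace Kantorovich

noncomputable def smallRoot (a : ℝ) : ℝ := (1 - √(1 - 2 * a)) / a

noncomputable def largeRoot (a : ℝ) : ℝ := (1 + √(1 - 2 * a)) / a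

section Roots

variable {a : ℝ}

theorem smallRoot_pos (ha : 0 < a) : 0 < smallRoot a :=
  div_pos (sub_pos.2 ((Real.sqrt_lt' one_pos).2 (by linarith))) ha

theorem smallRoot_le_largeRoot (ha : 0 < a) : smallRoot a ≤ largeRoot a := by
  unfold smallRoot largeRoot
  gcongr
  linarith [Real.sqrt_nonneg (1 - 2 * a)]

theorem smallRoot_add_largeRoot (ha : a ≠ 0) : a * (smallRoot a + largeRoot a) = 2 := by
  unfold smallRoot largeRoot
  field_simp
  ring

theorem smallRoot_mul_largeRoot (ha : a ≠ 0) (ha' : a ≤ 1 / 2) :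
    a * (smallRoot a * largeRoot a) = 2 := by
  have hc : √(1 - 2 * a) ^ 2 = 1 - 2 * a := Real.sq_sqrt (by linarith)
  unfold smallRoot largeRoot
  generalize √(1 - 2 * a) = c at hc ⊢
  field_simp
  linear_combination -hc

theorem mul_smallRoot_le_one (ha : 0 < a) : a * smallRoot a ≤ 1 := by
  rw [smallRoot, mul_div_cancel₀ _ ha.ne']
  linarith [Real.sqrt_nonneg (1 - 2 * a)]

theorem one_sub_mul_pos_of_lt_smallRoot {s : ℝ} (ha : 0 < a) (hs : s < smallRoot a) :
    0 < 1 - a * s := by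
  linarith [mul_lt_mul_of_pos_left hs ha, mul_smallRoot_le_one ha]

end Roots

/-- For `q(s) = a/2 (s - r₁) (s - r₂)` with `a (r₁ + r₂) = 2` one has `q'(t) = -(1 - a t)`, so
`t + d` is the Newton step for `q` from `t`. -/
theorem root_sub_newtonStep_mul {a r₁ r₂ t d : ℝ} (hsum : a * (r₁ + r₂) = 2)
    (hd : d * (1 - a * t) = a / 2 * ((r₁ - t) * (r₂ - t))) :
    (r₁ - (t + d)) * (1 - a * t) = a / 2 * (r₁ - t) ^ 2 := by
  linear_combination -hd - (r₁ - t) / 2 * hsum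

structure IsNewtonSystem (a : ℝ) (aa dd : ℕ → ℝ) : Prop where
  pos : 0 < a
  le_half : a ≤ 1 / 2
  aa_zero : aa 0 = 1
  dd_zero : dd 0 = 1
  aa_succ (n : ℕ) : aa (n + 1) = aa n / (1 - a * aa n * dd n)
  dd_succ (n : ℕ) : dd (n + 1) = a / 2 * aa (n + 1) * dd n ^ 2

namespace IsNewtonSystem

variable {a : ℝ} {aa dd : ℕ → ℝ}

/-- With `t n = ∑_{k<n} dd k` and `q(s) = a/2 (s - s*) (s - s**)`, this says
`aa n = -1 / q'(t n)` and `dd n = -q(t n) / q'(t n)`: `t` is Newton's iteration for `q` from `0`. -/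
theorem invariant (h : IsNewtonSystem a aa dd) (n : ℕ) :
    ∑ k ∈ range n, dd k < smallRoot a ∧
      aa n * (1 - a * ∑ k ∈ range n, dd k) = 1 ∧
      dd n * (1 - a * ∑ k ∈ range n, dd k) =
        a / 2 * ((smallRoot a - ∑ k ∈ range n, dd k) * (largeRoot a - ∑ k ∈ range n, dd k)) := by
  have hsum := smallRoot_add_largeRoot h.pos.ne'
  induction n with
  | zero =>
    simp only [range_zero, sum_empty, mul_zero, sub_zero, mul_one, h.aa_zero, h.dd_zero]
    exact ⟨smallRoot_pos h.pos, trivial,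
      by linear_combination -smallRoot_mul_largeRoot h.pos.ne' h.le_half / 2⟩
  | succ n ih =>
    rw [sum_range_succ]
    set t := ∑ k ∈ range n, dd k
    obtain ⟨ht, haa, hdd⟩ := ih
    have ht' : t + dd n < smallRoot a := by
      have : 0 < smallRoot a - t := sub_pos.2 ht
      refine sub_pos.1 (pos_of_mul_pos_left ?_ (one_sub_mul_pos_of_lt_smallRoot h.pos ht).le)
      rw [root_sub_newtonStep_mul hsum hdd]
      have := h.pos
      positivity
    have haa' : aa (n + 1) * (1 - a * (t + dd n)) = 1 := by
      have hκ : 1 - a * aa n * dd n = (1 - a * (t + dd n)) * aa n := by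
        linear_combination -haa
      have : aa n ≠ 0 := left_ne_zero_of_mul_eq_one haa
      rw [h.aa_succ, hκ]
      field_simp [(one_sub_mul_pos_of_lt_smallRoot h.pos ht').ne']
    refine ⟨ht', haa', ?_⟩
    rw [h.dd_succ]
    linear_combination (a / 2 * dd n ^ 2) * haa' + hdd + dd n / 2 * hsum

theorem one_sub_mul_sum_pos (h : IsNewtonSystem a aa dd) (n : ℕ) :
    0 < 1 - a * ∑ k ∈ range n, dd k :=
  one_sub_mul_pos_of_lt_smallRoot h.pos (h.invariant n).1

theorem aa_pos (h : IsNewtonSystem a aa dd) (n : ℕ) : 0 < aa n :=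
  pos_of_mul_pos_left (by rw [(h.invariant n).2.1]; exact one_pos) (h.one_sub_mul_sum_pos n).le

theorem dd_pos (h : IsNewtonSystem a aa dd) (n : ℕ) : 0 < dd n := by
  refine pos_of_mul_pos_left ?_ (h.one_sub_mul_sum_pos n).le
  have hu := sub_pos.2 (h.invariant n).1
  have hv := hu.trans_le (sub_le_sub_right (smallRoot_le_largeRoot h.pos) _)
  rw [(h.invariant n).2.2]
  exact mul_pos (half_pos h.pos) (mul_pos hu hv)

theorem mul_aa_mul_dd_lt_one (h : IsNewtonSystem a aa dd) (n : ℕ) : a * aa n * dd n < 1 := by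
  have hκ : 1 - a * aa n * dd n = (1 - a * ∑ k ∈ range (n + 1), dd k) * aa n := by
    rw [sum_range_succ]
    linear_combination -(h.invariant n).2.1
  have := mul_pos (h.one_sub_mul_sum_pos (n + 1)) (h.aa_pos n)
  linarith

theorem largeRoot_sub_sum_succ (h : IsNewtonSystem a aa dd) (n : ℕ) :
    largeRoot a - ∑ k ∈ range (n + 1), dd k =
      a / 2 * aa n * (largeRoot a - ∑ k ∈ range n, dd k) ^ 2 := by
  obtain ⟨-, haa, hdd⟩ := h.invariant n
  have hsum : a * (largeRoot a + smallRoot a) = 2 := by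
    rw [add_comm]; exact smallRoot_add_largeRoot h.pos.ne'
  have key := root_sub_newtonStep_mul hsum (by rw [hdd]; ring)
  rw [sum_range_succ]
  linear_combination (aa n) * key - (largeRoot a - (∑ k ∈ range n, dd k + dd n)) * haa

theorem largeRoot_sub_sum_le (h : IsNewtonSystem a aa dd) (n : ℕ) :
    largeRoot a - ∑ k ∈ range n, dd k ≤ largeRoot a :=
  sub_le_self _ (sum_nonneg fun k _ => (h.dd_pos k).le)

theorem smallRoot_sub_sum_le (h : IsNewtonSystem a aa dd) (n : ℕ) :
    smallRoot a - ∑ k ∈ range n, dd k ≤ smallRoot a / 2 ^ n := by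
  induction n with
  | zero => simp
  | succ n ih =>
    obtain ⟨ht, -, hdd⟩ := h.invariant n
    set t := ∑ k ∈ range n, dd k
    have key := root_sub_newtonStep_mul (smallRoot_add_largeRoot h.pos.ne') hdd
    have hu := sub_pos.2 ht
    have hgap : a * (smallRoot a - t) ≤ 1 - a * t := by
      linarith [mul_smallRoot_le_one h.pos]
    have hhalf : smallRoot a - (t + dd n) ≤ (smallRoot a - t) / 2 := by
      have hu' : 0 ≤ smallRoot a - (t + dd n) := by
        linarith [(h.invariant (n + 1)).1, sum_range_succ dd n]
      refine le_of_mul_le_mul_right ?_ (mul_pos h.pos hu)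
      nlinarith
    rw [sum_range_succ, pow_succ, ← div_div]
    linarith

theorem hasSum (h : IsNewtonSystem a aa dd) : HasSum dd (smallRoot a) := by
  refine (hasSum_iff_tendsto_nat_of_nonneg (fun n => (h.dd_pos n).le) _).2 ?_
  have hgeom : Tendsto (fun n : ℕ => smallRoot a / 2 ^ n) atTop (𝓝 0) :=
    tendsto_const_nhds.div_atTop (tendsto_pow_atTop_atTop_of_one_lt one_lt_two)
  have h0 := squeeze_zero (fun n => (sub_pos.2 (h.invariant n).1).le) h.smallRoot_sub_sum_le hgeom
  simpa using h0.const_sub (smallRoot a)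

end IsNewtonSystem

end Kantorovich

open Kantorovich

theorem stmt_7_general
    {E V : Type*} [NormedAddCommGroup E] [NormedSpace ℝ E] [CompleteSpace E]
    [NormedAddCommGroup V] [NormedSpace ℝ V]
    (F : E → V) (F' : E → (E →L[ℝ] V)) (F'' : E → (E →L[ℝ] E →L[ℝ] V))
    (hF' : ∀ x, HasFDerivAt F (F' x) x)
    (hF'' : ∀ x, HasFDerivAt F' (F'' x) x)
    (x₀ : E) (e₀ : E ≃L[ℝ] V) (he₀ : (e₀ : E →L[ℝ] V) = F' x₀)
    (K₂ B η : ℝ) (hK₂ : 0 < K₂) (hB : 0 < B) (hη : 0 < η)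
    (hbound : ∀ x, ‖F'' x‖ ≤ K₂)
    (hBinv : ‖(e₀.symm : V →L[ℝ] E)‖ ≤ B)
    (hη' : ‖e₀.symm (F x₀)‖ ≤ η)
    (a : ℝ) (haK : a = K₂ * B * η) (hKant : a ≤ 1 / 2)
    (aa dd : ℕ → ℝ) (ha0 : aa 0 = 1) (hd0 : dd 0 = 1)
    (haa : ∀ n, aa (n + 1) = aa n / (1 - a * aa n * dd n))
    (hdd : ∀ n, dd (n + 1) = a / 2 * aa (n + 1) * (dd n) ^ 2)
    (sstar sstarstar : ℝ)
    (hsstar : sstar = (1 - Real.sqrt (1 - 2 * a)) / a)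
    (hsstarstar : sstarstar = (1 + Real.sqrt (1 - 2 * a)) / a) :
    ∃ x : ℕ → E, x 0 = x₀ ∧
      (∀ n, ∃ e : E ≃L[ℝ] V, (e : E →L[ℝ] V) = F' (x n) ∧
        ‖(e.symm : V →L[ℝ] E)‖ ≤ aa n * B ∧
        x (n + 1) = x n - e.symm (F (x n))) ∧
      ∃ xs : E, Filter.Tendsto x Filter.atTop (nhds xs) ∧ F xs = 0 ∧
        (∀ n, ‖x (n + 1) - x n‖ ≤ dd n * η) ∧
        ‖xs - x₀‖ ≤ sstar * η ∧
        (∀ n, 1 ≤ n → ‖xs - x n‖ ≤ (sstar - ∑ k ∈ Finset.range n, dd k) * η) ∧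
        (∀ z : E, ‖z - x₀‖ < sstarstar * η → F z = 0 → z = xs) := by
  subst haK
  have hsys : IsNewtonSystem (K₂ * B * η) aa dd := ⟨by positivity, hKant, ha0, hd0, haa, hdd⟩
  obtain rfl : sstar = smallRoot (K₂ * B * η) := hsstar
  obtain rfl : sstarstar = largeRoot (K₂ * B * η) := hsstarstar
  have hLip (u v : E) : ‖F' v - F' u‖ ≤ K₂ * ‖v - u‖ :=
    convex_univ.norm_image_sub_le_of_norm_hasFDerivWithin_le
      (fun z _ => (hF'' z).hasFDerivWithinAt) (fun z _ => hbound z) (Set.mem_univ u)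
      (Set.mem_univ v)
  choose e he heβ hstep using newtonSeq_majorized hF' hLip hK₂.le he₀
    (β := fun n => aa n * B) (δ := fun n => dd n * η) (by simpa [ha0]) (by simpa [hd0])
    (fun n => (by ring : _ = K₂ * B * η * aa n * dd n).trans_lt (hsys.mul_aa_mul_dd_lt_one n))
    (fun n => by rw [haa]; ring) (fun n => by rw [hdd]; ring)
  set x := newtonSeq F F' x₀
  have hx₀ : x 0 = x₀ := rfl
  have hx (n : ℕ) : x (n + 1) = x n - (e n).symm (F (x n)) := newtonSeq_succ (he n)
  obtain ⟨xs, hlim, herr⟩ := exists_tendsto_norm_sub_le_of_hasSum (hsys.hasSum.mul_right η) hstep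
  simp only [← sum_mul, ← sub_mul] at herr
  refine ⟨x, hx₀, fun n => ⟨e n, he n, heβ n, hx n⟩, xs, hlim,
    image_eq_zero_of_tendsto_newton hF' hLip he hx hlim, hstep, by simpa [hx₀] using herr 0,
    fun n _ => herr n, fun z hz hFz => tendsto_nhds_unique ?_ hlim⟩
  refine tendsto_root_of_newton hF' hLip hK₂.le he hx heβ
    (w := fun n => (largeRoot (K₂ * B * η) - ∑ k ∈ range n, dd k) * η)
    (fun n => by rw [hsys.largeRoot_sub_sum_succ]; ring)
    (fun n => by simpa using mul_le_mul_of_nonneg_right (hsys.largeRoot_sub_sum_le n) hη.le) hFz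
    (by simpa [hx₀] using hz)

/-- **Kantorovich-type theorem for Newton's method with a priori error estimates.**
Let `E`, `V` be real Banach spaces, `F : E → V` twice Fréchet differentiable, `x₀ ∈ E` with
`F'(x₀)` invertible, and `K₂, B, η > 0` with `a := K₂Bη ≤ 1/2`, `‖F''(x)‖ ≤ K₂` everywhere,
`‖F'(x₀)⁻¹‖ ≤ B`, `‖F'(x₀)⁻¹F(x₀)‖ ≤ η`.  Then the Newton sequence is well defined,
converges to a root `x*` of `F`, and for all `n`:
`F'(x_n)` is invertible with `‖F'(x_n)⁻¹‖ ≤ a_n B`; `‖x_{n+1} − x_n‖ ≤ d_n η`;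
`‖x* − x₀‖ ≤ s* η`; for `n ≥ 1`, `‖x* − x_n‖ ≤ (s* − ∑_{k<n} d_k) η`.
Moreover `x*` is the only root of `F` in the ball `B(x₀, s** η)`,
where `s* = (1 − √(1−2a))/a`, `s** = (1 + √(1−2a))/a` and `(a_n)`, `(d_n)` is the Newton
system of sequences associated with `a`. -/
theorem stmt_7
    {E V : Type*} [NormedAddCommGroup E] [NormedSpace ℝ E] [CompleteSpace E]
    [NormedAddCommGroup V] [NormedSpace ℝ V] [CompleteSpace V]
    (F : E → V) (F' : E → (E →L[ℝ] V)) (F'' : E → (E →L[ℝ] E →L[ℝ] V))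
    (hF' : ∀ x, HasFDerivAt F (F' x) x)
    (hF'' : ∀ x, HasFDerivAt F' (F'' x) x)
    (x₀ : E) (e₀ : E ≃L[ℝ] V) (he₀ : (e₀ : E →L[ℝ] V) = F' x₀)
    (K₂ B η : ℝ) (hK₂ : 0 < K₂) (hB : 0 < B) (hη : 0 < η)
    (hbound : ∀ x, ‖F'' x‖ ≤ K₂)
    (hBinv : ‖(e₀.symm : V →L[ℝ] E)‖ ≤ B)
    (hη' : ‖e₀.symm (F x₀)‖ ≤ η)
    (a : ℝ) (haK : a = K₂ * B * η) (hKant : a ≤ 1 / 2)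
    (aa dd : ℕ → ℝ) (ha0 : aa 0 = 1) (hd0 : dd 0 = 1)
    (haa : ∀ n, aa (n + 1) = aa n / (1 - a * aa n * dd n))
    (hdd : ∀ n, dd (n + 1) = a / 2 * aa (n + 1) * (dd n) ^ 2)
    (sstar sstarstar : ℝ)
    (hsstar : sstar = (1 - Real.sqrt (1 - 2 * a)) / a)
    (hsstarstar : sstarstar = (1 + Real.sqrt (1 - 2 * a)) / a) :
    ∃ x : ℕ → E, x 0 = x₀ ∧
      (∀ n, ∃ e : E ≃L[ℝ] V, (e : E →L[ℝ] V) = F' (x n) ∧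
        ‖(e.symm : V →L[ℝ] E)‖ ≤ aa n * B ∧
        x (n + 1) = x n - e.symm (F (x n))) ∧
      ∃ xs : E, Filter.Tendsto x Filter.atTop (nhds xs) ∧ F xs = 0 ∧
        (∀ n, ‖x (n + 1) - x n‖ ≤ dd n * η) ∧
        ‖xs - x₀‖ ≤ sstar * η ∧
        (∀ n, 1 ≤ n → ‖xs - x n‖ ≤ (sstar - ∑ k ∈ Finset.range n, dd k) * η) ∧
        (∀ z : E, ‖z - x₀‖ < sstarstar * η → F z = 0 → z = xs) :=
  stmt_7_general F F' F'' hF' hF'' x₀ e₀ he₀ K₂ B η hK₂ hB hη hbound hBinv hη' a haK hKant aa dd ha0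
    hd0 haa hdd sstar sstarstar hsstar hsstarstar
end

section
/- Let 0 < a ≤ 1/2, q(s) = (a/2)s² − s + 1 and s* = (1 − √(1 − 2a))/a. Define the Steffensen sequence by s_0 = 0 and s_{n+1} = s_n − q(s_n)/q[s_n, s_n + q(s_n)], and the Newton sequence by t_0 = 0 and t_{n+1} = t_n − q(t_n)/q'(t_n). Then (s_n) is monotonically increasing and converges to s*, and for all n ≥ 0 one has 0 ≤ t_n ≤ s_n ≤ s*. -/
/-!
Let `r` be the smaller root of `q`, so that `a r ≤ 1` and `q x = (r - x) (1 - a (x + r) / 2) ≥ 0`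
on `[0, r]`. In closed form the Newton step is `x + q x / (1 - a x)` and the Steffensen step is
`x + q x / (1 - a x - a q(x) / 2)`: the smaller denominator makes Steffensen's step the longer one.
The Newton map equals `r - a (r - x)² / (2 (1 - a x))`, hence is monotone on `[0, r]`, and clearing
denominators shows that the Steffensen step stays below `r` while at least halving the error.
Induction gives `0 ≤ t n ≤ s n ≤ r` and `r - s n ≤ r / 2 ^ n`.
-/

open Filter Topology

noncomputable def steffensenStep (f : ℝ → ℝ) (x : ℝ) : ℝ :=
  x - f x / ((f (x + f x) - f x) / (x + f x - x))

noncomputable def newtonStep (f : ℝ → ℝ) (x : ℝ) : ℝ :=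
  x - f x / deriv f x

noncomputable def adimQuad (a x : ℝ) : ℝ :=
  a / 2 * x ^ 2 - x + 1

lemma sq_div_add_mul_le_sq_div_add_mul {m a u v : ℝ} (hm : 0 ≤ m) (ha : 0 ≤ a) (hu : 0 ≤ u)
    (huv : u ≤ v) : u ^ 2 / (m + a * u) ≤ v ^ 2 / (m + a * v) := by
  rcases (add_nonneg hm (mul_nonneg ha hu)).eq_or_lt with h | h
  · rw [← h, div_zero]
    exact div_nonneg (sq_nonneg v) (by nlinarith)
  · rw [div_le_div_iff₀ h (by nlinarith)]
    nlinarith [mul_nonneg hm (mul_nonneg (sub_nonneg.2 huv) (add_nonneg hu (hu.trans huv))),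
      mul_nonneg (mul_nonneg ha (mul_nonneg hu (hu.trans huv))) (sub_nonneg.2 huv)]

lemma tendsto_of_le_of_sub_le_half_sub {u : ℕ → ℝ} {r : ℝ} (hle : ∀ n, u n ≤ r)
    (hhalf : ∀ n, r - u (n + 1) ≤ (r - u n) / 2) : Tendsto u atTop (𝓝 r) := by
  have hgeom : ∀ n, r - u n ≤ (r - u 0) * (1 / 2) ^ n := by
    intro n
    induction n with
    | zero => simp
    | succ n ih => rw [pow_succ]; linarith [hhalf n]
  have hlim : Tendsto (fun n => r - (r - u 0) * (1 / 2 : ℝ) ^ n) atTop (𝓝 r) := by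
    have hpow := tendsto_pow_atTop_nhds_zero_of_lt_one (r := (1 / 2 : ℝ)) (by norm_num) (by norm_num)
    simpa using tendsto_const_nhds.sub (hpow.const_mul (r - u 0))
  exact tendsto_of_tendsto_of_tendsto_of_le_of_le hlim tendsto_const_nhds
    (fun n => by linarith [hgeom n]) hle

namespace adimQuad

variable {a : ℝ}

lemma deriv_eq (x : ℝ) : deriv (adimQuad a) x = a * x - 1 := by
  have h : HasDerivAt (fun y => a / 2 * y ^ 2 - y + 1) (a / 2 * (2 * x) - 1) x := by
    simpa using (((hasDerivAt_pow 2 x).const_mul (a / 2)).sub (hasDerivAt_id x)).add_const 1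
  rw [show adimQuad a = fun y => a / 2 * y ^ 2 - y + 1 from rfl, h.deriv]
  ring

lemma newtonStep_eq (x : ℝ) : newtonStep (adimQuad a) x = x + adimQuad a x / (1 - a * x) := by
  rw [newtonStep, deriv_eq, ← neg_sub 1, div_neg, sub_neg_eq_add]

/-- When `q x = 0` the divided difference is the junk value `0 / 0 = 0` and both sides are `x`. -/
lemma steffensenStep_eq (x : ℝ) :
    steffensenStep (adimQuad a) x = x + adimQuad a x / (1 - a * x - a * adimQuad a x / 2) := by
  rw [steffensenStep, add_sub_cancel_left]
  rcases eq_or_ne (adimQuad a x) 0 with h | h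
  · simp [h]
  · have hdiff : adimQuad a (x + adimQuad a x) - adimQuad a x
        = adimQuad a x * -(1 - a * x - a * adimQuad a x / 2) := by
      simp only [adimQuad]; ring
    rw [hdiff, mul_div_cancel_left₀ _ h, div_neg, sub_neg_eq_add]

lemma root_spec (ha : 0 < a) (ha' : a ≤ 1 / 2) :
    a * ((1 - √(1 - 2 * a)) / a) ≤ 1 ∧ adimQuad a ((1 - √(1 - 2 * a)) / a) = 0 := by
  have hb := Real.sq_sqrt (show 0 ≤ 1 - 2 * a by linarith)
  set b := √(1 - 2 * a)
  refine ⟨?_, ?_⟩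
  · rw [mul_div_cancel₀ _ ha.ne']
    linarith [Real.sqrt_nonneg (1 - 2 * a)]
  · rw [adimQuad]
    field_simp
    linear_combination hb

variable {r : ℝ}

lemma one_le_of_eq_zero (ha : 0 ≤ a) (hr : adimQuad a r = 0) : 1 ≤ r := by
  rw [adimQuad] at hr
  nlinarith [mul_nonneg ha (sq_nonneg r)]

lemma eq_mul_of_eq_zero (hr : adimQuad a r = 0) (x : ℝ) :
    adimQuad a x = (r - x) * (1 - a * (x + r) / 2) := by
  rw [adimQuad] at hr ⊢
  linear_combination hr

lemma nonneg (ha : 0 ≤ a) (har : a * r ≤ 1) (hr : adimQuad a r = 0) {x : ℝ} (hx : x ≤ r) :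
    0 ≤ adimQuad a x := by
  rw [eq_mul_of_eq_zero hr]
  exact mul_nonneg (sub_nonneg.2 hx) (by nlinarith)

lemma newtonStep_eq_sub (ha : 0 < a) (har : a * r ≤ 1) (hr : adimQuad a r = 0) {x : ℝ}
    (hxr : x ≤ r) : newtonStep (adimQuad a) x = r - a / 2 * (r - x) ^ 2 / (1 - a * x) := by
  rw [newtonStep_eq, eq_mul_of_eq_zero hr]
  rcases eq_or_ne (1 - a * x) 0 with h | h
  · have hx : x = r := le_antisymm hxr (le_of_mul_le_mul_left (by linarith) ha)
    simp [hx]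
  · rw [show (r - x) * (1 - a * (x + r) / 2)
        = (r - x) * (1 - a * x) - a / 2 * (r - x) ^ 2 by ring, sub_div, mul_div_cancel_right₀ _ h]
    ring

lemma le_newtonStep (ha : 0 ≤ a) (har : a * r ≤ 1) (hr : adimQuad a r = 0) {x : ℝ}
    (hxr : x ≤ r) : x ≤ newtonStep (adimQuad a) x := by
  rw [newtonStep_eq, le_add_iff_nonneg_right]
  exact div_nonneg (nonneg ha har hr hxr) (by nlinarith)

lemma newtonStep_mono (ha : 0 < a) (har : a * r ≤ 1) (hr : adimQuad a r = 0) {t x : ℝ}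
    (htx : t ≤ x) (hxr : x ≤ r) : newtonStep (adimQuad a) t ≤ newtonStep (adimQuad a) x := by
  have key := sq_div_add_mul_le_sq_div_add_mul (sub_nonneg.2 har) ha.le (sub_nonneg.2 hxr)
    (sub_le_sub_left htx r)
  rw [show 1 - a * r + a * (r - x) = 1 - a * x by ring,
    show 1 - a * r + a * (r - t) = 1 - a * t by ring] at key
  rw [newtonStep_eq_sub ha har hr (htx.trans hxr), newtonStep_eq_sub ha har hr hxr,
    mul_div_assoc, mul_div_assoc]
  gcongr

lemma steffensenDenom_pos (ha : 0 < a) (har : a * r ≤ 1) (hr : adimQuad a r = 0) {x : ℝ}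
    (hx0 : 0 ≤ x) (hxr : x < r) : 0 < 1 - a * x - a * adimQuad a x / 2 := by
  have h1 : 0 ≤ 1 - a * (x + r) / 2 := by nlinarith
  have h2 : 0 < a ^ 2 * (r - x) * (x + r) / 4 := by
    have := sub_pos.2 hxr
    have := one_le_of_eq_zero ha.le hr
    positivity
  have h : 1 - a * x - a * adimQuad a x / 2
      = (1 - a * (x + r) / 2) + a ^ 2 * (r - x) * (x + r) / 4 := by
    rw [eq_mul_of_eq_zero hr]; ring
  linarith

lemma newtonStep_le_steffensenStep (ha : 0 < a) (har : a * r ≤ 1) (hr : adimQuad a r = 0)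
    {x : ℝ} (hx0 : 0 ≤ x) (hxr : x ≤ r) :
    newtonStep (adimQuad a) x ≤ steffensenStep (adimQuad a) x := by
  rcases hxr.eq_or_lt with rfl | hxr
  · simp [newtonStep_eq, steffensenStep_eq, hr]
  have hq := nonneg ha.le har hr hxr.le
  rw [newtonStep_eq, steffensenStep_eq]
  have hD : 1 - a * x - a * adimQuad a x / 2 ≤ 1 - a * x := by linarith [mul_nonneg ha.le hq]
  exact add_le_add_right
    (div_le_div_of_nonneg_left hq (steffensenDenom_pos ha har hr hx0 hxr) hD) x

lemma le_steffensenStep (ha : 0 < a) (har : a * r ≤ 1) (hr : adimQuad a r = 0) {x : ℝ}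
    (hx0 : 0 ≤ x) (hxr : x ≤ r) : x ≤ steffensenStep (adimQuad a) x := by
  rcases hxr.eq_or_lt with rfl | hxr
  · simp [steffensenStep_eq, hr]
  rw [steffensenStep_eq, le_add_iff_nonneg_right]
  exact div_nonneg (nonneg ha.le har hr hxr.le) (steffensenDenom_pos ha har hr hx0 hxr).le

lemma steffensenStep_le (ha : 0 < a) (har : a * r ≤ 1) (hr : adimQuad a r = 0) {x : ℝ}
    (hx0 : 0 ≤ x) (hxr : x ≤ r) : steffensenStep (adimQuad a) x ≤ r := by
  rcases hxr.eq_or_lt with rfl | hxr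
  · simp [steffensenStep_eq, hr]
  have hD := steffensenDenom_pos ha har hr hx0 hxr
  have h : (r - x) * (1 - a * x - a * adimQuad a x / 2) - adimQuad a x
      = a ^ 2 * (r - x) ^ 2 * (x + r) / 4 := by
    rw [eq_mul_of_eq_zero hr]; ring
  have : 0 ≤ a ^ 2 * (r - x) ^ 2 * (x + r) / 4 := by
    have := one_le_of_eq_zero ha.le hr
    exact div_nonneg (mul_nonneg (by positivity) (by linarith)) zero_le_four
  rw [steffensenStep_eq, ← le_sub_iff_add_le', div_le_iff₀ hD]
  linarith

lemma sub_steffensenStep_le_half (ha : 0 < a) (har : a * r ≤ 1) (hr : adimQuad a r = 0)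
    {x : ℝ} (hx0 : 0 ≤ x) (hxr : x ≤ r) : r - steffensenStep (adimQuad a) x ≤ (r - x) / 2 := by
  rcases hxr.eq_or_lt with rfl | hxr
  · simp [steffensenStep_eq, hr]
  have hD := steffensenDenom_pos ha har hr hx0 hxr
  have h : 2 * adimQuad a x - (r - x) * (1 - a * x - a * adimQuad a x / 2)
      = (r - x) * (1 - a * r + a * adimQuad a x / 2) := by
    rw [eq_mul_of_eq_zero hr]; ring
  have : 0 ≤ (r - x) * (1 - a * r + a * adimQuad a x / 2) := by
    have := nonneg ha.le har hr hxr.le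
    exact mul_nonneg (sub_nonneg.2 hxr.le) (by nlinarith)
  have hhalf : (r - x) / 2 ≤ adimQuad a x / (1 - a * x - a * adimQuad a x / 2) := by
    rw [div_le_div_iff₀ two_pos hD]
    linarith
  rw [steffensenStep_eq]
  linarith

end adimQuad

/-- **Steffensen's method dominates Newton's on the adimensional quadratic.**
Let `0 < a ≤ 1/2`, `q(s) = (a/2)s² − s + 1` and `s* = (1 − √(1 − 2a))/a`.  Define the
Steffensen sequence `s₀ = 0`, `s_{n+1} = s_n − q(s_n)/q[s_n, s_n + q(s_n)]` (with
`q[x,y] = (q(y) − q(x))/(y − x)`) and the Newton sequence `t₀ = 0`,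
`t_{n+1} = t_n − q(t_n)/q'(t_n)`.  Then `(s_n)` is monotonically increasing, converges to
`s*`, and `0 ≤ t_n ≤ s_n ≤ s*` for all `n`. -/
theorem stmt_8 (a : ℝ) (ha : 0 < a) (ha' : a ≤ 1 / 2)
    (q : ℝ → ℝ) (hq : q = fun s => a / 2 * s ^ 2 - s + 1)
    (sstar : ℝ) (hsstar : sstar = (1 - Real.sqrt (1 - 2 * a)) / a)
    (s t : ℕ → ℝ) (hs0 : s 0 = 0) (ht0 : t 0 = 0)
    (hsn : ∀ n, s (n + 1) =
      s n - q (s n) / ((q (s n + q (s n)) - q (s n)) / (s n + q (s n) - s n)))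
    (htn : ∀ n, t (n + 1) = t n - q (t n) / deriv q (t n)) :
    Monotone s ∧ Filter.Tendsto s Filter.atTop (nhds sstar) ∧
      ∀ n, 0 ≤ t n ∧ t n ≤ s n ∧ s n ≤ sstar := by
  obtain rfl : q = adimQuad a := hq
  obtain ⟨har, hr⟩ := hsstar ▸ adimQuad.root_spec ha ha'
  have hsn : ∀ n, s (n + 1) = steffensenStep (adimQuad a) (s n) := hsn
  have htn : ∀ n, t (n + 1) = newtonStep (adimQuad a) (t n) := htn
  have inv : ∀ n, 0 ≤ t n ∧ t n ≤ s n ∧ s n ≤ sstar := by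
    intro n
    induction n with
    | zero => simpa [hs0, ht0] using zero_le_one.trans (adimQuad.one_le_of_eq_zero ha.le hr)
    | succ n ih =>
      obtain ⟨ht, hts, hsr⟩ := ih
      rw [hsn, htn]
      exact ⟨ht.trans (adimQuad.le_newtonStep ha.le har hr (hts.trans hsr)),
        (adimQuad.newtonStep_mono ha har hr hts hsr).trans
          (adimQuad.newtonStep_le_steffensenStep ha har hr (ht.trans hts) hsr),
        adimQuad.steffensenStep_le ha har hr (ht.trans hts) hsr⟩
  have hs_nonneg (n : ℕ) : 0 ≤ s n := (inv n).1.trans (inv n).2.1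
  refine ⟨monotone_nat_of_le_succ fun n => ?_,
    tendsto_of_le_of_sub_le_half_sub (fun n => (inv n).2.2) fun n => ?_, inv⟩
  · rw [hsn]
    exact adimQuad.le_steffensenStep ha har hr (hs_nonneg n) (inv n).2.2
  · rw [hsn]
    exact adimQuad.sub_steffensenStep_le_half ha har hr (hs_nonneg n) (inv n).2.2
end

section
/- Let 0 < a ≤ 1/2 and q(s) = (a/2)s² − s + 1, and define the Steffensen sequence s_0 = 0, s_{n+1} = s_n − q(s_n)/q[s_n, s_n + q(s_n)]. Then for all n ≥ 0: (I) q'(s_n) = −1/a_n; (II) q[s_n, s_n + q(s_n)] = −1/b_n; (III) q(s_n) = c_n; (IV) s_{n+1} − s_n = d_n; (V) s_n = r_n. In particular all these quantities are well defined and c_n > 0, b_n > 0, a_n > 0, d_n > 0 for all n. -/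
/-!
Write `t = 1 - a s = -q'(s)` and `u = t - (a/2) q(s) = -q[s, s + q(s)]`, so that Steffensen's
step is `s' = s + q(s)/u`. Since `q` is quadratic, `q(s') = (a²/2) (q(s)/u)² (s + q(s)/2)`, which is
the recursion for `c_n`, and the recursions for `a_n` and `b_n` are `1/t'` and `1/u` expressed
through the previous quantities. Everything is well defined because the iterates stay in the
region `0 ≤ s`, `a s < 1`, `q(s) > 0`: there `4 (t u - a q(s)) = t² (2 - t) + (1 - 2a) (t + 2) > 0`,
i.e. `a (s' - s) < t`, which is `a s' < 1`.
-/

noncomputable section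

namespace Steffensen

lemma one_div_div_one_sub_mul {K : Type*} [Field K] {t : K} (ht : t ≠ 0) (x y : K) :
    1 / t / (1 - x * (1 / t) * y) = 1 / (t - x * y) := by
  rw [show 1 - x * (1 / t) * y = (t - x * y) / t by field_simp, div_div_div_cancel_right₀ ht]

def quad (a s : ℝ) : ℝ := a / 2 * s ^ 2 - s + 1

/-- `-q[s, s + q(s)]` for `q = quad a`. -/
def denom (a s : ℝ) : ℝ := 1 - a * s - a / 2 * quad a s

def steffensenStep (a s : ℝ) : ℝ :=
  s - quad a s / ((quad a (s + quad a s) - quad a s) / (s + quad a s - s))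

variable {a s : ℝ}

lemma hasDerivAt_quad (a x : ℝ) : HasDerivAt (quad a) (a * x - 1) x :=
  ((((hasDerivAt_pow 2 x).const_mul (a / 2)).sub (hasDerivAt_id' x)).add_const 1).congr_deriv
    (by push_cast; ring)

lemma quad_slope_self (h : quad a s ≠ 0) :
    (quad a (s + quad a s) - quad a s) / (s + quad a s - s) = -denom a s := by
  rw [add_sub_cancel_left, div_eq_iff h, denom]
  unfold quad
  ring

lemma steffensenStep_eq (h : quad a s ≠ 0) : steffensenStep a s = s + quad a s / denom a s := by
  rw [steffensenStep, quad_slope_self h, div_neg, sub_neg_eq_add]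

lemma quad_add_of_mul_denom {d : ℝ} (hd : d * denom a s = quad a s) :
    quad a (s + d) = a ^ 2 / 2 * d ^ 2 * (s + quad a s / 2) := by
  unfold denom quad at *
  linear_combination (a / 2 * d - 1) * hd

lemma mul_quad_lt_mul_denom (ha : a ≤ 1 / 2) (hs : 0 ≤ a * s) (has : a * s < 1) :
    a * quad a s < (1 - a * s) * denom a s := by
  have key : 4 * ((1 - a * s) * denom a s - a * quad a s) =
      (1 - a * s) ^ 2 * (2 - (1 - a * s)) + (1 - 2 * a) * ((1 - a * s) + 2) := by
    unfold denom quad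
    ring
  have h1 : 0 < (1 - a * s) ^ 2 * (2 - (1 - a * s)) :=
    mul_pos (pow_pos (by linarith) 2) (by linarith)
  have h2 : 0 ≤ (1 - 2 * a) * ((1 - a * s) + 2) := mul_nonneg (by linarith) (by linarith)
  linarith

lemma denom_pos (ha : a ≤ 1 / 2) (hs : 0 ≤ a * s) (has : a * s < 1) : 0 < denom a s := by
  have h : 4 * denom a s = 4 - 2 * a - 2 * (a * s) - (a * s) ^ 2 := by
    unfold denom quad
    ring
  nlinarith

lemma steffensenStep_mem (ha : 0 < a) (ha' : a ≤ 1 / 2)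
    (hs : 0 ≤ s ∧ a * s < 1 ∧ 0 < quad a s) :
    0 ≤ steffensenStep a s ∧ a * steffensenStep a s < 1 ∧ 0 < quad a (steffensenStep a s) := by
  obtain ⟨hs0, has, hq⟩ := hs
  have hlt := mul_quad_lt_mul_denom ha' (mul_nonneg ha.le hs0) has
  have hu := denom_pos ha' (mul_nonneg ha.le hs0) has
  have had : a * (quad a s / denom a s) < 1 - a * s := by
    rw [← mul_div_assoc, div_lt_iff₀ hu]
    linarith
  rw [steffensenStep_eq hq.ne', quad_add_of_mul_denom (div_mul_cancel₀ _ hu.ne')]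
  exact ⟨by positivity, by linarith, by positivity⟩

lemma steffensen_iterate_mem (ha : 0 < a) (ha' : a ≤ 1 / 2) {s : ℕ → ℝ} (hs0 : s 0 = 0)
    (hstep : ∀ n, s (n + 1) = steffensenStep a (s n)) (n : ℕ) :
    0 ≤ s n ∧ a * s n < 1 ∧ 0 < quad a (s n) := by
  induction n with
  | zero => simp [hs0, quad]
  | succ n ih => rw [hstep]; exact steffensenStep_mem ha ha' ih

lemma steffensenSystem_closed_form (ha : 0 < a) (ha' : a ≤ 1 / 2) {aa bb cc dd rr s : ℕ → ℝ}
    (ha0 : aa 0 = 1) (hc0 : cc 0 = 1) (hr0 : rr 0 = 0)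
    (hb : ∀ n, bb n = aa n / (1 - a / 2 * aa n * cc n))
    (hd : ∀ n, dd n = bb n * cc n)
    (haa : ∀ n, aa (n + 1) = aa n / (1 - a * aa n * dd n))
    (hcc : ∀ n, cc (n + 1) = a ^ 2 / 2 * (dd n) ^ 2 * (rr n + cc n / 2))
    (hrr : ∀ n, rr (n + 1) = rr n + dd n)
    (hs0 : s 0 = 0) (hstep : ∀ n, s (n + 1) = steffensenStep a (s n)) (n : ℕ) :
    aa n = 1 / (1 - a * s n) ∧ bb n = 1 / denom a (s n) ∧ cc n = quad a (s n) ∧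
      dd n = quad a (s n) / denom a (s n) ∧ rr n = s n := by
  have hbd : ∀ n, aa n = 1 / (1 - a * s n) → cc n = quad a (s n) →
      bb n = 1 / denom a (s n) ∧ dd n = quad a (s n) / denom a (s n) := by
    intro n hA hC
    have ht : 1 - a * s n ≠ 0 := by linarith [(steffensen_iterate_mem ha ha' hs0 hstep n).2.1]
    have hB : bb n = 1 / denom a (s n) := by
      rw [hb, hA, hC, one_div_div_one_sub_mul ht]
      rfl
    exact ⟨hB, by rw [hd, hB, hC, one_div_mul_eq_div]⟩
  suffices key : aa n = 1 / (1 - a * s n) ∧ cc n = quad a (s n) ∧ rr n = s n by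
    obtain ⟨hA, hC, hR⟩ := key
    exact ⟨hA, (hbd n hA hC).1, hC, (hbd n hA hC).2, hR⟩
  induction n with
  | zero => simp [ha0, hc0, hr0, hs0, quad]
  | succ n ih =>
    obtain ⟨hA, hC, hR⟩ := ih
    obtain ⟨hsn, has, hq⟩ := steffensen_iterate_mem ha ha' hs0 hstep n
    have hu := denom_pos ha' (mul_nonneg ha.le hsn) has
    have hD := (hbd n hA hC).2
    have hs' : s (n + 1) = s n + dd n := by rw [hstep, steffensenStep_eq hq.ne', hD]
    refine ⟨?_, ?_, ?_⟩
    · rw [haa, hA, one_div_div_one_sub_mul (by linarith), hs']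
      ring
    · rw [hcc, hR, hC, hs', hD, quad_add_of_mul_denom (div_mul_cancel₀ _ hu.ne')]
    · rw [hrr, hR, hs']

end Steffensen

end

open Steffensen

/-- **The Steffensen system of sequences matches Steffensen's method on the
adimensional quadratic.**
Let `0 < a ≤ 1/2`, `q(s) = (a/2)s² − s + 1` and let `s₀ = 0`,
`s_{n+1} = s_n − q(s_n)/q[s_n, s_n + q(s_n)]` be the Steffensen sequence, where
`q[x,y] = (q(y) − q(x))/(y − x)`.  With the Steffensen system `(a_n), (b_n), (c_n),
(d_n), (r_n)`, for all `n`: (I) `q'(s_n) = −1/a_n`; (II) `q[s_n, s_n + q(s_n)] = −1/b_n`;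
(III) `q(s_n) = c_n`; (IV) `s_{n+1} − s_n = d_n`; (V) `s_n = r_n`.  In particular all
these quantities are well defined and `a_n, b_n, c_n, d_n > 0` for all `n`. -/
theorem stmt_13 (a : ℝ) (ha : 0 < a) (ha' : a ≤ 1 / 2)
    (aa bb cc dd rr : ℕ → ℝ)
    (ha0 : aa 0 = 1) (hc0 : cc 0 = 1) (hr0 : rr 0 = 0)
    (hb : ∀ n, bb n = aa n / (1 - a / 2 * aa n * cc n))
    (hd : ∀ n, dd n = bb n * cc n)
    (haa : ∀ n, aa (n + 1) = aa n / (1 - a * aa n * dd n))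
    (hcc : ∀ n, cc (n + 1) = a ^ 2 / 2 * (dd n) ^ 2 * (rr n + cc n / 2))
    (hrr : ∀ n, rr (n + 1) = rr n + dd n)
    (q : ℝ → ℝ) (hq : q = fun s => a / 2 * s ^ 2 - s + 1)
    (s : ℕ → ℝ) (hs0 : s 0 = 0)
    (hsn : ∀ n, s (n + 1) =
      s n - q (s n) / ((q (s n + q (s n)) - q (s n)) / (s n + q (s n) - s n))) :
    ∀ n, deriv q (s n) = -(1 / aa n) ∧
      (q (s n + q (s n)) - q (s n)) / (s n + q (s n) - s n) = -(1 / bb n) ∧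
      q (s n) = cc n ∧
      s (n + 1) - s n = dd n ∧
      s n = rr n ∧
      0 < aa n ∧ 0 < bb n ∧ 0 < cc n ∧ 0 < dd n := by
  obtain rfl : q = quad a := hq
  have hstep : ∀ n, s (n + 1) = steffensenStep a (s n) := hsn
  intro n
  obtain ⟨hsn0, has, hqpos⟩ := steffensen_iterate_mem ha ha' hs0 hstep n
  have hu := denom_pos ha' (mul_nonneg ha.le hsn0) has
  obtain ⟨hA, hB, hC, hD, hR⟩ :=
    steffensenSystem_closed_form ha ha' ha0 hc0 hr0 hb hd haa hcc hrr hs0 hstep n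
  refine ⟨?_, ?_, hC.symm, ?_, hR.symm, ?_, ?_, hC ▸ hqpos, ?_⟩
  · rw [(hasDerivAt_quad a (s n)).deriv, hA, one_div_one_div]
    ring
  · rw [quad_slope_self hqpos.ne', hB, one_div_one_div]
  · rw [hstep, steffensenStep_eq hqpos.ne', hD, add_sub_cancel_left]
  · rw [hA]
    exact one_div_pos.2 (by linarith)
  · rw [hB]
    exact one_div_pos.2 hu
  · rw [hD]
    exact div_pos hqpos hu
end

section
/- For every real parameter a with 0 < a ≤ 1/2 and every n ≥ 0, the Steffensen system of sequences satisfies the invariant (1/a_n)² − 2a·c_n = 1 − 2a. -/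
/-! Put `s_n = 1 - a r_n`. Inductively `a_n = 1 / s_n`, `d_n = c_n / (s_n - a c_n / 2)` and
`s_{n+1} = s_n - a d_n`, so everything is a rational function of `(s_n, c_n, r_n)`, and the
quadratic relation `s_n² = 1 - 2a + 2a c_n` is preserved by the recursion. The side conditions
`0 < c_n`, `0 ≤ r_n`, `0 < s_n` keep every denominator positive; this is where `a ≤ 1/2` enters. -/

namespace Steffensen

def Invariant (a c r : ℝ) : Prop :=
  0 < c ∧ 0 ≤ r ∧ 0 < 1 - a * r ∧ (1 - a * r) ^ 2 = 1 - 2 * a + 2 * a * c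

theorem invariant_zero (a : ℝ) : Invariant a 1 0 := by
  refine ⟨one_pos, le_rfl, ?_, ?_⟩ <;> norm_num

lemma inv_div_one_sub_mul_inv {s k : ℝ} (hs : s ≠ 0) :
    s⁻¹ / (1 - k * s⁻¹) = (s - k)⁻¹ := by
  rw [show 1 - k * s⁻¹ = (s - k) * s⁻¹ by field_simp, div_mul_cancel_right₀ (inv_ne_zero hs)]

variable {a c r d : ℝ}

lemma Invariant.sub_half_pos (ha : 0 < a) (ha' : a ≤ 1 / 2) (h : Invariant a c r) :
    0 < 1 - a * r - a * c / 2 := by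
  obtain ⟨hc, hr, hs, hsq⟩ := h
  nlinarith [mul_pos ha hc, mul_nonneg ha.le hr]

theorem Invariant.step (ha : 0 < a) (ha' : a ≤ 1 / 2) (h : Invariant a c r)
    (hd : d = c / (1 - a * r - a * c / 2)) :
    Invariant a (a ^ 2 / 2 * d ^ 2 * (r + c / 2)) (r + d) := by
  have hden := h.sub_half_pos ha ha'
  obtain ⟨hc, hr, hs, hsq⟩ := h
  have hdc : d * (1 - a * r - a * c / 2) = c := by rw [hd, div_mul_cancel₀ _ hden.ne']
  have hd_pos : 0 < d := by rw [hd]; positivity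
  refine ⟨by positivity, by positivity, ?_, ?_⟩
  · -- `s - a d > 0` amounts to `s² - a c s / 2 - a c > 0`, i.e. `1 - 2a + a c (1 - s/2) > 0`.
    nlinarith [mul_pos ha hc, mul_pos ha hd_pos, mul_nonneg ha.le hr, mul_pos hd_pos hden]
  · linear_combination hsq + (-2 * a + a ^ 2 * d) * hdc

end Steffensen

open Steffensen in
/-- **Invariant of the Steffensen system of sequences.**
For `0 < a ≤ 1/2`, the Steffensen system `(a_n), (b_n), (c_n), (d_n), (r_n)` satisfies
`(1/a_n)² − 2a·c_n = 1 − 2a` for every `n`. -/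
theorem stmt_14 (a : ℝ) (ha : 0 < a) (ha' : a ≤ 1 / 2)
    (aa bb cc dd rr : ℕ → ℝ)
    (ha0 : aa 0 = 1) (hc0 : cc 0 = 1) (hr0 : rr 0 = 0)
    (hb : ∀ n, bb n = aa n / (1 - a / 2 * aa n * cc n))
    (hd : ∀ n, dd n = bb n * cc n)
    (haa : ∀ n, aa (n + 1) = aa n / (1 - a * aa n * dd n))
    (hcc : ∀ n, cc (n + 1) = a ^ 2 / 2 * (dd n) ^ 2 * (rr n + cc n / 2))
    (hrr : ∀ n, rr (n + 1) = rr n + dd n) :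
    ∀ n, (1 / aa n) ^ 2 - 2 * a * cc n = 1 - 2 * a := by
  have key : ∀ n, Invariant a (cc n) (rr n) ∧ aa n = (1 - a * rr n)⁻¹ := by
    intro n
    induction n with
    | zero => simpa [ha0, hc0, hr0] using invariant_zero a
    | succ n ih =>
      obtain ⟨hinv, hx⟩ := ih
      have hs : 1 - a * rr n ≠ 0 := hinv.2.2.1.ne'
      have hdn : dd n = cc n / (1 - a * rr n - a * cc n / 2) := by
        have hk : a / 2 * aa n * cc n = a * cc n / 2 * (1 - a * rr n)⁻¹ := by rw [hx]; ring
        rw [hd, hb, hk, hx, inv_div_one_sub_mul_inv hs]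
        field_simp
      refine ⟨hcc n ▸ hrr n ▸ hinv.step ha ha' hdn, ?_⟩
      have hk : a * aa n * dd n = a * dd n * (1 - a * rr n)⁻¹ := by rw [hx]; ring
      rw [haa, hk, hx, inv_div_one_sub_mul_inv hs, hrr]
      ring_nf
  intro n
  obtain ⟨⟨-, -, -, hsq⟩, hx⟩ := key n
  rw [hx, one_div, inv_inv, hsq]
  ring
end

section
/- Let V be a real Banach space and G : V → V twice continuously Fréchet differentiable with ‖G''(ξ)‖ ≤ a for all ξ ∈ V, where 0 < a ≤ 1/2. Let y₀ ∈ V satisfy ‖G(y₀)‖ ≤ 1 and G'(y₀) = −I (minus the identity operator). Define the ASIS sequence by y_{n+1} = y_n − G[y_n, y_n + G(y_n)]⁻¹ G(y_n), where G[x,y] = ∫₀¹ G'(x + θ(y − x)) dθ. Then the sequence is well defined and for all n ≥ 0: (a) G'(y_n) is invertible with ‖G'(y_n)⁻¹‖ ≤ a_n; (b) G[y_n, y_n + G(y_n)] is invertible with ‖G[y_n, y_n + G(y_n)]⁻¹‖ ≤ b_n; (c) ‖G(y_n)‖ ≤ c_n; (d) ‖y_{n+1} − y_n‖ ≤ d_n;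 (e) ‖y_n − y₀‖ ≤ r_n. -/
/-!
The scalar sequences are the ASIS iteration for Kantorovich's majorant
`p(r) = a/2 r² - r + 1` started at `r₀ = 0`: along it `c_n = p(r_n)` and `a_n = 1/(1 - a r_n)`,
and `r_n` stays in the region `0 ≤ r`, `a r < 1`, `p(r) > 0` (this is where `a ≤ 1/2` enters),
which keeps every denominator positive.

The operator estimates follow by induction. `G'` is `a`-Lipschitz, so `G[y_n, y_n + G(y_n)]`
and `G'(y_{n+1})` differ from `G'(y_n)` by at most `a c_n / 2` and `a d_n`, and Banach's
perturbation lemma gives (a) and (b). For (c), with `Δ = y_{n+1} - y_n` one has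
`G(y_{n+1}) = (G[y_n, y_{n+1}] - G[y_n, y_n + G(y_n)]) Δ`, and since `G'(y₀) = -I`,
`Δ - G(y_n) = (G[y_n, y_n + G(y_n)] - G'(y₀)) Δ`.
-/

open intervalIntegral ContinuousLinearMap
open scoped NNReal

theorem ContinuousLinearEquiv.exists_eq_of_norm_sub_le {𝕜 E F : Type*}
    [NontriviallyNormedField 𝕜] [NormedAddCommGroup E] [NormedSpace 𝕜 E] [CompleteSpace E]
    [NormedAddCommGroup F] [NormedSpace 𝕜 F] (e : E ≃L[𝕜] F) {B : E →L[𝕜] F} {K M : ℝ}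
    (hK : ‖(e.symm : F →L[𝕜] E)‖ ≤ K) (hM : ‖B - e‖ ≤ M) (hKM : 0 < 1 - K * M) :
    ∃ f : E ≃L[𝕜] F, (f : E →L[𝕜] F) = B ∧ ‖(f.symm : F →L[𝕜] E)‖ ≤ K / (1 - K * M) := by
  have hK₀ : 0 ≤ K := (norm_nonneg _).trans hK
  have hM₀ : 0 ≤ M := (norm_nonneg _).trans hM
  set t : E →L[𝕜] E := (e.symm : F →L[𝕜] E) ∘L ((e : E →L[𝕜] F) - B)
  have ht : ‖t‖ < 1 := by
    calc ‖t‖ ≤ K * M := by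
          refine (opNorm_comp_le _ _).trans (mul_le_mul hK ?_ (norm_nonneg _) hK₀)
          rwa [norm_sub_rev]
      _ < 1 := by linarith
  set f := (ContinuousLinearEquiv.ofUnit (Units.oneSub t ht)).trans e
  have hf : (f : E →L[𝕜] F) = B := by
    ext x
    change e ((1 - t) x) = B x
    simp [t]
  refine ⟨f, hf, ?_⟩
  have hsymm : (f.symm : F →L[𝕜] E) = (e.symm : F →L[𝕜] E) +
      (f.symm : F →L[𝕜] E) ∘L ((e : E →L[𝕜] F) - B) ∘L (e.symm : F →L[𝕜] E) := by
    ext v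
    simp [← hf]
  have hbound : ‖(f.symm : F →L[𝕜] E)‖ ≤ K + ‖(f.symm : F →L[𝕜] E)‖ * (M * K) := by
    have hdiff : ‖((e : E →L[𝕜] F) - B) ∘L (e.symm : F →L[𝕜] E)‖ ≤ M * K := by
      refine (opNorm_comp_le _ _).trans (mul_le_mul ?_ hK (norm_nonneg _) hM₀)
      rwa [norm_sub_rev]
    refine (congrArg norm hsymm).trans_le <| (norm_add_le _ _).trans (add_le_add hK ?_)
    exact (opNorm_comp_le _ _).trans (mul_le_mul_of_nonneg_left hdiff (norm_nonneg _))
  rw [le_div_iff₀ hKM]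
  linarith

namespace ASIS

theorem inv_div_one_sub_inv_mul {s m : ℝ} (hs : s ≠ 0) : s⁻¹ / (1 - s⁻¹ * m) = (s - m)⁻¹ := by
  rw [show 1 - s⁻¹ * m = (s - m) / s by field_simp, div_div_eq_mul_div, inv_mul_cancel₀ hs,
    one_div]

noncomputable def majorant (a r : ℝ) : ℝ := a / 2 * r ^ 2 - r + 1

theorem majorant_step_bounds {a r : ℝ} (ha : 0 < a) (ha' : a ≤ 1 / 2) (hr : 0 ≤ r)
    (har : a * r < 1) (hc : 0 < majorant a r) :
    0 < 1 - a * r - a / 2 * majorant a r ∧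
      a * (r + majorant a r / (1 - a * r - a / 2 * majorant a r)) < 1 := by
  set c := majorant a r
  set s := 1 - a * r
  have hs : 0 < s := by linarith
  have hs1 : s ≤ 1 := by nlinarith
  have hsq : s ^ 2 = 2 * a * c + 1 - 2 * a := by simp only [s, c, majorant]; ring
  have hD : 0 < s - a / 2 * c := by nlinarith [mul_pos ha hc]
  refine ⟨hD, ?_⟩
  rw [mul_add, mul_div_assoc', ← lt_sub_iff_add_lt', div_lt_iff₀ hD]
  nlinarith [mul_pos ha hc]

theorem majorant_add {a r d : ℝ} (hd : d * (1 - a * r - a / 2 * majorant a r) = majorant a r) :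
    majorant a (r + d) = a ^ 2 / 2 * d ^ 2 * (r + majorant a r / 2) := by
  unfold majorant at *
  linear_combination (a / 2 * d - 1) * hd

structure SteffensenSystem (a : ℝ) (aa bb cc dd rr : ℕ → ℝ) : Prop where
  aa_zero : aa 0 = 1
  cc_zero : cc 0 = 1
  rr_zero : rr 0 = 0
  bb_eq : ∀ n, bb n = aa n / (1 - a / 2 * aa n * cc n)
  dd_eq : ∀ n, dd n = bb n * cc n
  aa_succ : ∀ n, aa (n + 1) = aa n / (1 - a * aa n * dd n)
  cc_succ : ∀ n, cc (n + 1) = a ^ 2 / 2 * dd n ^ 2 * (rr n + cc n / 2)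
  rr_succ : ∀ n, rr (n + 1) = rr n + dd n

namespace SteffensenSystem

variable {a : ℝ} {aa bb cc dd rr : ℕ → ℝ}

theorem bb_eq_inv (hs : SteffensenSystem a aa bb cc dd rr) {n : ℕ}
    (haa : aa n = (1 - a * rr n)⁻¹) (hs₀ : 0 < 1 - a * rr n) :
    bb n = (1 - a * rr n - a / 2 * cc n)⁻¹ := by
  rw [hs.bb_eq, haa,
    show a / 2 * (1 - a * rr n)⁻¹ * cc n = (1 - a * rr n)⁻¹ * (a / 2 * cc n) by ring,
    inv_div_one_sub_inv_mul hs₀.ne']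

theorem aa_succ_eq_inv (hs : SteffensenSystem a aa bb cc dd rr) {n : ℕ}
    (haa : aa n = (1 - a * rr n)⁻¹) (hs₀ : 0 < 1 - a * rr n) :
    aa (n + 1) = (1 - a * rr (n + 1))⁻¹ := by
  rw [hs.aa_succ, hs.rr_succ, haa,
    show a * (1 - a * rr n)⁻¹ * dd n = (1 - a * rr n)⁻¹ * (a * dd n) by ring,
    inv_div_one_sub_inv_mul hs₀.ne', mul_add, sub_sub]

theorem majorant_invariant (hs : SteffensenSystem a aa bb cc dd rr) (ha : 0 < a)
    (ha' : a ≤ 1 / 2) (n : ℕ) :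
    0 ≤ rr n ∧ a * rr n < 1 ∧ 0 < cc n ∧ cc n = majorant a (rr n) ∧
      aa n = (1 - a * rr n)⁻¹ := by
  induction n with
  | zero => simp [hs.rr_zero, hs.cc_zero, hs.aa_zero, majorant]
  | succ n ih =>
    obtain ⟨hr, har, hc, hcp, haa⟩ := ih
    obtain ⟨hD, hnext⟩ := majorant_step_bounds ha ha' hr har (hcp ▸ hc)
    rw [← hcp] at hD hnext
    have hdd : dd n = cc n / (1 - a * rr n - a / 2 * cc n) := by
      rw [hs.dd_eq, hs.bb_eq_inv haa (by linarith), inv_mul_eq_div]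
    have hdD : dd n * (1 - a * rr n - a / 2 * cc n) = cc n := by
      rw [hdd, div_mul_cancel₀ _ hD.ne']
    refine ⟨?_, ?_, ?_, ?_, hs.aa_succ_eq_inv haa (by linarith)⟩
    · rw [hs.rr_succ, hdd]; positivity
    · rwa [hs.rr_succ, hdd]
    · rw [hs.cc_succ, hdd]; positivity
    · rw [hs.cc_succ, hs.rr_succ, hcp, majorant_add (hcp ▸ hdD)]

theorem denominators_pos (hs : SteffensenSystem a aa bb cc dd rr) (ha : 0 < a)
    (ha' : a ≤ 1 / 2) (n : ℕ) :
    0 < 1 - a / 2 * aa n * cc n ∧ 0 < 1 - a * aa n * dd n := by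
  obtain ⟨hr, har, hc, hcp, haa⟩ := hs.majorant_invariant ha ha' n
  obtain ⟨hD, -⟩ := majorant_step_bounds ha ha' hr har (hcp ▸ hc)
  obtain ⟨-, har', -⟩ := hs.majorant_invariant ha ha' (n + 1)
  rw [← hcp] at hD
  have hs₀ : 0 < 1 - a * rr n := by linarith
  rw [hs.rr_succ] at har'
  rw [haa]
  constructor
  · rw [show 1 - a / 2 * (1 - a * rr n)⁻¹ * cc n
        = (1 - a * rr n - a / 2 * cc n) / (1 - a * rr n) by field_simp]
    positivity
  · rw [show 1 - a * (1 - a * rr n)⁻¹ * dd n = (1 - a * (rr n + dd n)) / (1 - a * rr n) by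
        field_simp; ring]
    have : 0 < 1 - a * (rr n + dd n) := by linarith
    positivity

end SteffensenSystem

section DividedDifference

variable {E W : Type*} [NormedAddCommGroup E] [NormedSpace ℝ E] [NormedAddCommGroup W]
  [NormedSpace ℝ W]

/-- The integral divided difference `F[x, x + h]`. -/
noncomputable def divDiff (F : E → W) (x h : E) : W := ∫ θ in (0 : ℝ)..1, F (x + θ • h)

@[simp]
theorem divDiff_zero [CompleteSpace W] (F : E → W) (x : E) : divDiff F x 0 = F x := by
  simp [divDiff]

theorem norm_divDiff_sub_divDiff_le {L : ℝ≥0} {F : E → W} (hF : LipschitzWith L F)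
    (x₁ x₂ h₁ h₂ : E) :
    ‖divDiff F x₁ h₁ - divDiff F x₂ h₂‖ ≤ L * ‖x₁ - x₂‖ + L / 2 * ‖h₁ - h₂‖ := by
  have hint : ∀ x h : E, IntervalIntegrable (fun θ : ℝ => F (x + θ • h)) MeasureTheory.volume 0 1 :=
    fun x h => (hF.continuous.comp (by fun_prop)).intervalIntegrable 0 1
  have hpt : ∀ θ : ℝ, 0 ≤ θ →
      ‖F (x₁ + θ • h₁) - F (x₂ + θ • h₂)‖ ≤ L * ‖x₁ - x₂‖ + L * ‖h₁ - h₂‖ * θ := by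
    intro θ hθ
    calc ‖F (x₁ + θ • h₁) - F (x₂ + θ • h₂)‖ ≤ L * ‖(x₁ - x₂) + θ • (h₁ - h₂)‖ := by
          rw [show x₁ - x₂ + θ • (h₁ - h₂) = (x₁ + θ • h₁) - (x₂ + θ • h₂) by
            rw [smul_sub]; abel]
          exact hF.norm_sub_le _ _
      _ ≤ L * (‖x₁ - x₂‖ + θ * ‖h₁ - h₂‖) := by
          grw [norm_add_le, norm_smul, Real.norm_of_nonneg hθ]
      _ = L * ‖x₁ - x₂‖ + L * ‖h₁ - h₂‖ * θ := by ring
  calc ‖divDiff F x₁ h₁ - divDiff F x₂ h₂‖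
      = ‖∫ θ in (0 : ℝ)..1, (F (x₁ + θ • h₁) - F (x₂ + θ • h₂))‖ := by
        rw [divDiff, divDiff, integral_sub (hint x₁ h₁) (hint x₂ h₂)]
    _ ≤ ∫ θ in (0 : ℝ)..1, (L * ‖x₁ - x₂‖ + L * ‖h₁ - h₂‖ * θ) :=
        norm_integral_le_of_norm_le zero_le_one
          (MeasureTheory.ae_of_all _ fun θ hθ => hpt θ hθ.1.le)
          (Continuous.intervalIntegrable (by fun_prop) 0 1)
    _ = L * ‖x₁ - x₂‖ + L / 2 * ‖h₁ - h₂‖ := by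
        rw [integral_add intervalIntegrable_const (intervalIntegrable_id.const_mul _),
          integral_const, integral_const_mul, integral_id]
        ring

theorem sub_eq_divDiff_apply [CompleteSpace W] {G : E → W} {G' : E → E →L[ℝ] W}
    (hG : ∀ y, HasFDerivAt G (G' y) y) (hG' : Continuous G') (x h : E) :
    G (x + h) - G x = divDiff G' x h h := by
  have hderiv : ∀ θ ∈ Set.uIcc (0 : ℝ) 1,
      HasDerivAt (fun τ : ℝ => G (x + τ • h)) (G' (x + θ • h) h) θ := fun θ _ =>
    (hG _).comp_hasDerivAt θ
      ((((hasDerivAt_id θ).smul_const h).const_add x).congr_deriv (one_smul ℝ h))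
  have hcont : Continuous fun θ : ℝ => G' (x + θ • h) := hG'.comp (by fun_prop)
  rw [divDiff, ContinuousLinearMap.intervalIntegral_apply (hcont.intervalIntegrable 0 1),
    integral_eq_sub_of_hasDerivAt hderiv
      ((hcont.clm_apply continuous_const).intervalIntegrable 0 1)]
  simp

end DividedDifference

section Iteration

variable {V : Type*} [NormedAddCommGroup V] [NormedSpace ℝ V]
  {G : V → V} {G' : V → V →L[ℝ] V}

theorem norm_apply_add_le_of_divDiff_apply_eq_neg [CompleteSpace V] {L : ℝ≥0}
    (hG : ∀ y, HasFDerivAt G (G' y) y) (hG' : LipschitzWith L G') {x Δ : V} (hΔ : divDiff G' x (G x) Δ = -G x) :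
    ‖G (x + Δ)‖ ≤ L / 2 * ‖Δ - G x‖ * ‖Δ‖ := by
  have : G (x + Δ) = (divDiff G' x Δ - divDiff G' x (G x)) Δ := by
    rw [sub_apply, hΔ, ← sub_eq_divDiff_apply hG hG'.continuous]
    abel
  rw [this]
  calc ‖(divDiff G' x Δ - divDiff G' x (G x)) Δ‖
      ≤ ‖divDiff G' x Δ - divDiff G' x (G x)‖ * ‖Δ‖ := le_opNorm _ _
    _ ≤ (L * ‖x - x‖ + L / 2 * ‖Δ - G x‖) * ‖Δ‖ := by
      grw [norm_divDiff_sub_divDiff_le hG']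
    _ = L / 2 * ‖Δ - G x‖ * ‖Δ‖ := by simp

theorem norm_sub_le_of_divDiff_apply_eq_neg [CompleteSpace V] {L : ℝ≥0}
    (hG' : LipschitzWith L G') {x y₀ h Δ : V}
    (hI : G' y₀ = -ContinuousLinearMap.id ℝ V) (hΔ : divDiff G' x h Δ = -h) :
    ‖Δ - h‖ ≤ (L * ‖x - y₀‖ + L / 2 * ‖h‖) * ‖Δ‖ := by
  have : Δ - h = (divDiff G' x h - divDiff G' y₀ 0) Δ := by
    rw [sub_apply, hΔ, divDiff_zero, hI]
    simp [sub_eq_add_neg, add_comm]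
  rw [this]
  calc ‖(divDiff G' x h - divDiff G' y₀ 0) Δ‖
      ≤ ‖divDiff G' x h - divDiff G' y₀ 0‖ * ‖Δ‖ := le_opNorm _ _
    _ ≤ (L * ‖x - y₀‖ + L / 2 * ‖h - 0‖) * ‖Δ‖ := by
      grw [norm_divDiff_sub_divDiff_le hG']
    _ = (L * ‖x - y₀‖ + L / 2 * ‖h‖) * ‖Δ‖ := by rw [sub_zero]

variable (G G') in
noncomputable def asisStep (x : V) : V := x - (divDiff G' x (G x)).inverse (G x)

theorem asisStep_eq {x : V} {f : V ≃L[ℝ] V} (hf : (f : V →L[ℝ] V) = divDiff G' x (G x)) :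
    asisStep G G' x = x - f.symm (G x) := by
  rw [asisStep, ← hf, inverse_equiv]
  rfl

theorem norm_apply_asisStep_le [CompleteSpace V] {L : ℝ≥0} (hG : ∀ y, HasFDerivAt G (G' y) y)
    (hG' : LipschitzWith L G') {y₀ x : V} (hI : G' y₀ = -ContinuousLinearMap.id ℝ V)
    {f : V ≃L[ℝ] V} (hf : (f : V →L[ℝ] V) = divDiff G' x (G x)) :
    ‖G (asisStep G G' x)‖ ≤ L ^ 2 / 2 * ‖asisStep G G' x - x‖ ^ 2 * (‖x - y₀‖ + ‖G x‖ / 2) := by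
  have hΔ : divDiff G' x (G x) (asisStep G G' x - x) = -G x := by
    rw [← hf, asisStep_eq hf, sub_sub_cancel_left, map_neg, ContinuousLinearEquiv.coe_coe,
      ContinuousLinearEquiv.apply_symm_apply]
  set Δ := asisStep G G' x - x
  calc ‖G (asisStep G G' x)‖ = ‖G (x + Δ)‖ := by rw [add_sub_cancel]
    _ ≤ L / 2 * ‖Δ - G x‖ * ‖Δ‖ := norm_apply_add_le_of_divDiff_apply_eq_neg hG hG' hΔ
    _ ≤ L / 2 * ((L * ‖x - y₀‖ + L / 2 * ‖G x‖) * ‖Δ‖) * ‖Δ‖ := by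
      grw [norm_sub_le_of_divDiff_apply_eq_neg hG' hI hΔ]
    _ = L ^ 2 / 2 * ‖Δ‖ ^ 2 * (‖x - y₀‖ + ‖G x‖ / 2) := by ring

variable (G G') in
def AsisBounds (y₀ x : V) (A c r : ℝ) : Prop :=
  (∃ e : V ≃L[ℝ] V, (e : V →L[ℝ] V) = G' x ∧ ‖(e.symm : V →L[ℝ] V)‖ ≤ A) ∧
    ‖G x‖ ≤ c ∧ ‖x - y₀‖ ≤ r

theorem SteffensenSystem.asisBounds_succ [CompleteSpace V] {a : ℝ≥0} {aa bb cc dd rr : ℕ → ℝ}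
    (hs : SteffensenSystem a aa bb cc dd rr) (ha : 0 < (a : ℝ)) (ha' : (a : ℝ) ≤ 1 / 2)
    (hG : ∀ y, HasFDerivAt G (G' y) y) (hG' : LipschitzWith a G') {y₀ x : V}
    (hI : G' y₀ = -ContinuousLinearMap.id ℝ V) {n : ℕ}
    (hx : AsisBounds G G' y₀ x (aa n) (cc n) (rr n)) :
    ∃ f : V ≃L[ℝ] V, (f : V →L[ℝ] V) = divDiff G' x (G x) ∧ ‖(f.symm : V →L[ℝ] V)‖ ≤ bb n ∧
      ‖asisStep G G' x - x‖ ≤ dd n ∧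
      AsisBounds G G' y₀ (asisStep G G' x) (aa (n + 1)) (cc (n + 1)) (rr (n + 1)) := by
  obtain ⟨⟨e, he, heA⟩, hc, hr⟩ := hx
  obtain ⟨hden_b, hden_a⟩ := hs.denominators_pos ha ha' n
  have hBe : ‖divDiff G' x (G x) - e‖ ≤ a / 2 * cc n := by
    rw [he, ← divDiff_zero G' x]
    refine (norm_divDiff_sub_divDiff_le hG' _ _ _ _).trans ?_
    simp only [sub_self, norm_zero, mul_zero, zero_add, sub_zero]
    exact mul_le_mul_of_nonneg_left hc (by positivity)
  obtain ⟨f, hf, hfb⟩ := e.exists_eq_of_norm_sub_le heA hBe (by linarith)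
  rw [show aa n / (1 - aa n * (a / 2 * cc n)) = bb n by rw [hs.bb_eq]; ring_nf] at hfb
  have hd : ‖asisStep G G' x - x‖ ≤ dd n := by
    rw [asisStep_eq hf, sub_sub_cancel_left, norm_neg, hs.dd_eq]
    exact le_of_opNorm_le_of_le _ hfb hc
  set x' := asisStep G G' x
  refine ⟨f, hf, hfb, hd, ⟨?_, ?_, ?_⟩⟩
  · have hx'e : ‖G' x' - e‖ ≤ a * dd n := by
      rw [he]
      exact (hG'.norm_sub_le _ _).trans (mul_le_mul_of_nonneg_left hd ha.le)
    obtain ⟨f', hf', hf'b⟩ := e.exists_eq_of_norm_sub_le heA hx'e (by linarith)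
    refine ⟨f', hf', hf'b.trans_eq ?_⟩
    rw [hs.aa_succ]
    ring_nf
  · calc ‖G x'‖ ≤ a ^ 2 / 2 * ‖x' - x‖ ^ 2 * (‖x - y₀‖ + ‖G x‖ / 2) :=
          norm_apply_asisStep_le hG hG' hI hf
      _ ≤ a ^ 2 / 2 * dd n ^ 2 * (rr n + cc n / 2) := by gcongr
      _ = cc (n + 1) := (hs.cc_succ n).symm
  · calc ‖x' - y₀‖ = ‖(x' - x) + (x - y₀)‖ := by rw [sub_add_sub_cancel]
      _ ≤ dd n + rr n := (norm_add_le _ _).trans (add_le_add hd hr)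
      _ = rr (n + 1) := by rw [hs.rr_succ, add_comm]

end Iteration

end ASIS

open ASIS in
theorem stmt_16_general
    {V : Type*} [NormedAddCommGroup V] [NormedSpace ℝ V] [CompleteSpace V]
    (a : ℝ) (ha : 0 < a) (ha' : a ≤ 1 / 2)
    (aa bb cc dd rr : ℕ → ℝ)
    (ha0 : aa 0 = 1) (hc0 : cc 0 = 1) (hr0 : rr 0 = 0)
    (hb : ∀ n, bb n = aa n / (1 - a / 2 * aa n * cc n))
    (hd : ∀ n, dd n = bb n * cc n)
    (haa : ∀ n, aa (n + 1) = aa n / (1 - a * aa n * dd n))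
    (hcc : ∀ n, cc (n + 1) = a ^ 2 / 2 * (dd n) ^ 2 * (rr n + cc n / 2))
    (hrr : ∀ n, rr (n + 1) = rr n + dd n)
    (G : V → V) (G' : V → (V →L[ℝ] V)) (G'' : V → (V →L[ℝ] V →L[ℝ] V))
    (hG' : ∀ y, HasFDerivAt G (G' y) y)
    (hG'' : ∀ y, HasFDerivAt G' (G'' y) y)
    (hGbound : ∀ ξ, ‖G'' ξ‖ ≤ a)
    (y₀ : V) (hy₀ : ‖G y₀‖ ≤ 1)
    (hI : G' y₀ = -(ContinuousLinearMap.id ℝ V)) :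
    ∃ y : ℕ → V, y 0 = y₀ ∧ ∀ n,
      (∃ e' : V ≃L[ℝ] V, (e' : V →L[ℝ] V) = G' (y n) ∧
        ‖(e'.symm : V →L[ℝ] V)‖ ≤ aa n) ∧
      (∃ e : V ≃L[ℝ] V,
        (e : V →L[ℝ] V) = ∫ θ in (0 : ℝ)..1, G' (y n + θ • G (y n)) ∧
        ‖(e.symm : V →L[ℝ] V)‖ ≤ bb n ∧
        y (n + 1) = y n - e.symm (G (y n))) ∧
      ‖G (y n)‖ ≤ cc n ∧
      ‖y (n + 1) - y n‖ ≤ dd n ∧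
      ‖y n - y₀‖ ≤ rr n := by
  let L : ℝ≥0 := ⟨a, ha.le⟩
  have hs : SteffensenSystem L aa bb cc dd rr := ⟨ha0, hc0, hr0, hb, hd, haa, hcc, hrr⟩
  have hlip : LipschitzWith L G' :=
    lipschitzWith_of_nnnorm_fderiv_le (fun y => (hG'' y).differentiableAt) fun y => by
      rw [(hG'' y).fderiv, ← NNReal.coe_le_coe]
      exact hGbound y
  have hbounds : ∀ n, AsisBounds G G' y₀ ((asisStep G G')^[n] y₀) (aa n) (cc n) (rr n) := by
    intro n
    induction n with
    | zero =>
      refine ⟨⟨ContinuousLinearEquiv.neg ℝ, hI.symm, ?_⟩, by simpa [hc0], by simp [hr0]⟩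
      rw [ContinuousLinearEquiv.symm_neg, ha0]
      exact (norm_neg (ContinuousLinearMap.id ℝ V)).trans_le norm_id_le
    | succ n ih =>
      obtain ⟨-, -, -, -, h⟩ := hs.asisBounds_succ ha ha' hG' hlip hI ih
      rwa [Function.iterate_succ_apply']
  refine ⟨fun n => (asisStep G G')^[n] y₀, rfl, fun n => ?_⟩
  obtain ⟨he, hc, hr⟩ := hbounds n
  obtain ⟨f, hf, hfb, hd, -⟩ := hs.asisBounds_succ ha ha' hG' hlip hI (hbounds n)
  simp only [Function.iterate_succ_apply'] at hd ⊢
  exact ⟨he, ⟨f, hf, hfb, asisStep_eq hf⟩, hc, hd, hr⟩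

/-- **A priori error estimates for the ASIS (adimensional scale invariant Steffensen)
method.**
Let `V` be a real Banach space and `G : V → V` twice continuously Fréchet differentiable
with `‖G''(ξ)‖ ≤ a` for all `ξ`, where `0 < a ≤ 1/2`.  Let `y₀` satisfy `‖G(y₀)‖ ≤ 1` and
`G'(y₀) = −I`.  Then the ASIS sequence `y_{n+1} = y_n − G[y_n, y_n + G(y_n)]⁻¹ G(y_n)`
(with the integral divided difference `G[x,y] = ∫₀¹ G'(x + θ(y − x)) dθ`) is well defined
and, with the Steffensen system `(a_n), (b_n), (c_n), (d_n), (r_n)`, for all `n`: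
(a) `G'(y_n)` is invertible with `‖G'(y_n)⁻¹‖ ≤ a_n`;
(b) `G[y_n, y_n + G(y_n)]` is invertible with `‖G[y_n, y_n + G(y_n)]⁻¹‖ ≤ b_n`;
(c) `‖G(y_n)‖ ≤ c_n`; (d) `‖y_{n+1} − y_n‖ ≤ d_n`; (e) `‖y_n − y₀‖ ≤ r_n`. -/
theorem stmt_16
    {V : Type*} [NormedAddCommGroup V] [NormedSpace ℝ V] [CompleteSpace V]
    (a : ℝ) (ha : 0 < a) (ha' : a ≤ 1 / 2)
    (aa bb cc dd rr : ℕ → ℝ)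
    (ha0 : aa 0 = 1) (hc0 : cc 0 = 1) (hr0 : rr 0 = 0)
    (hb : ∀ n, bb n = aa n / (1 - a / 2 * aa n * cc n))
    (hd : ∀ n, dd n = bb n * cc n)
    (haa : ∀ n, aa (n + 1) = aa n / (1 - a * aa n * dd n))
    (hcc : ∀ n, cc (n + 1) = a ^ 2 / 2 * (dd n) ^ 2 * (rr n + cc n / 2))
    (hrr : ∀ n, rr (n + 1) = rr n + dd n)
    (G : V → V) (G' : V → (V →L[ℝ] V)) (G'' : V → (V →L[ℝ] V →L[ℝ] V))
    (hG' : ∀ y, HasFDerivAt G (G' y) y)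
    (hG'' : ∀ y, HasFDerivAt G' (G'' y) y)
    (hG''cont : Continuous G'')
    (hGbound : ∀ ξ, ‖G'' ξ‖ ≤ a)
    (y₀ : V) (hy₀ : ‖G y₀‖ ≤ 1)
    (hI : G' y₀ = -(ContinuousLinearMap.id ℝ V)) :
    ∃ y : ℕ → V, y 0 = y₀ ∧ ∀ n,
      (∃ e' : V ≃L[ℝ] V, (e' : V →L[ℝ] V) = G' (y n) ∧
        ‖(e'.symm : V →L[ℝ] V)‖ ≤ aa n) ∧
      (∃ e : V ≃L[ℝ] V,
        (e : V →L[ℝ] V) = ∫ θ in (0 : ℝ)..1, G' (y n + θ • G (y n)) ∧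
        ‖(e.symm : V →L[ℝ] V)‖ ≤ bb n ∧
        y (n + 1) = y n - e.symm (G (y n))) ∧
      ‖G (y n)‖ ≤ cc n ∧
      ‖y (n + 1) - y n‖ ≤ dd n ∧
      ‖y n - y₀‖ ≤ rr n :=
  stmt_16_general a ha ha' aa bb cc dd rr ha0 hc0 hr0 hb hd haa hcc hrr G G' G'' hG' hG'' hGbound y₀
    hy₀ hI
end

section
/- Let E and V be real Banach spaces, F : E → V twice continuously Fréchet differentiable, and x₀ ∈ E with F(x₀) ≠ 0 and F'(x₀) invertible. Let K₂, B, η > 0 satisfy ‖F(x₀)‖ ≤ η/B, ‖F'(x₀)⁻¹‖ ≤ B, ‖F''(x)‖ ≤ K₂ for all x ∈ E, and a := K₂Bη ≤ 1/2. Define the adimensional form G(y) = F(−‖F(x₀)‖·F'(x₀)⁻¹ y)/‖F(x₀)‖, set y₀ = −F'(x₀)x₀/‖F(x₀)‖, and let (y_n) be the ASIS sequence y_{n+1} = y_n − G[y_n, y_n + G(y_n)]⁻¹ G(y_n) with G[x,y] = ∫₀¹ G'(x + θ(y − x)) dθ. Then (y_n) is well defined and converges to a point y* with G(y*) = 0,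 and, setting x_n = −‖F(x₀)‖·F'(x₀)⁻¹ y_n and x* = −‖F(x₀)‖·F'(x₀)⁻¹ y*, one has F(x*) = 0 and, for all n ≥ 0: ‖x_{n+1} − x_n‖ ≤ d_n·η; ‖x* − x_n‖ ≤ (s* − r_n)·η; and F'(x_n) is invertible with ‖F'(x_n)⁻¹‖ ≤ a_n·B, where s* = (1 − √(1 − 2a))/a. -/
/-!
Steffensen's method is run on the adimensional form `G` of `F`, for which `G'(y₀) = -I`,
`‖G(y₀)‖ = 1` and `G'` is `a`-Lipschitz. The integral divided difference `G[y, y + h]` then differs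
from `G'(y)` by at most `a‖h‖/2`, and the mean value identity `G(y + h) - G(y) = G[y, y + h] h`
gives `‖G(y + h)‖ ≤ (a/2)‖h - G(y)‖‖h‖` for the Steffensen step `h`. Inductively,
`‖y_n - y₀‖ ≤ r_n`, `‖G(y_n)‖ ≤ c_n`, `‖G'(y_n)⁻¹‖ ≤ a_n`, `‖G[y_n, y_n + G(y_n)]⁻¹‖ ≤ b_n` and
`‖y_{n+1} - y_n‖ ≤ d_n`, the operator bounds coming from the Banach perturbation lemma. The scalar
sequences never leave Kantorovich's parabola `c = a/2 r² - r + 1` below its smaller root `s*`, so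
`(r_n)` increases to at most `s*` and majorizes `(y_n)`, which therefore converges to a zero of `G`.
The estimates for `x_n` follow because `x = -‖F x₀‖ F'(x₀)⁻¹ y` is `η`-Lipschitz in `y` and
`F'(x) = -G'(y) F'(x₀)`.
-/

open Filter Topology NNReal

lemma kantorovich_quadratic_eq {a s sstar : ℝ} (ha : a ≠ 0) (hs : s ^ 2 = 1 - 2 * a)
    (hsstar : a * sstar = 1 - s) (t : ℝ) :
    a / 2 * t ^ 2 - t + 1 = (sstar - t) * (s + a / 2 * (sstar - t)) := by
  have h : a * (a / 2 * t ^ 2 - t + 1 - (sstar - t) * (s + a / 2 * (sstar - t))) = 0 := by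
    linear_combination (1 / 2 : ℝ) * hs + (a * t - a / 2 * sstar - (1 - s) / 2 - s) * hsstar
  linarith [(mul_eq_zero.1 h).resolve_left ha]

lemma kantorovich_quadratic_bounds {a s sstar r c q : ℝ} (ha : 0 < a) (hs : 0 ≤ s)
    (hs2 : s ^ 2 = 1 - 2 * a) (hsstar : a * sstar = 1 - s) (hr : 0 ≤ r) (hrs : r < sstar)
    (hc : c = a / 2 * r ^ 2 - r + 1) (hq : q = 1 - a * r - a / 2 * c) :
    0 < c ∧ 0 < q ∧ q ≤ 1 ∧ c < (sstar - r) * q := by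
  have hu : 0 < sstar - r := by linarith
  rw [kantorovich_quadratic_eq ha.ne' hs2 hsstar r] at hc
  have hcq : (sstar - r) * q - c = a / 2 * (sstar - r) ^ 2 * (1 - s - a / 2 * (sstar - r)) := by
    rw [hq, hc]; linear_combination (-(sstar - r)) * hsstar
  have hc0 : 0 < c := by rw [hc]; positivity
  have hcq' : c < (sstar - r) * q := by
    have : a / 2 * (sstar - r) < 1 - s := by nlinarith
    have : 0 < a / 2 * (sstar - r) ^ 2 * (1 - s - a / 2 * (sstar - r)) := by
      apply mul_pos <;> [positivity; linarith]
    linarith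
  refine ⟨hc0, pos_of_mul_pos_right (hc0.trans hcq') hu.le, ?_, hcq'⟩
  nlinarith [mul_nonneg ha.le hr]

structure SteffensenSystem (a : ℝ) (aa bb cc dd rr : ℕ → ℝ) : Prop where
  aa_zero : aa 0 = 1
  cc_zero : cc 0 = 1
  rr_zero : rr 0 = 0
  bb_eq : ∀ n, bb n = aa n / (1 - a / 2 * aa n * cc n)
  dd_eq : ∀ n, dd n = bb n * cc n
  aa_succ : ∀ n, aa (n + 1) = aa n / (1 - a * aa n * dd n)
  cc_succ : ∀ n, cc (n + 1) = a ^ 2 / 2 * dd n ^ 2 * (rr n + cc n / 2)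
  rr_succ : ∀ n, rr (n + 1) = rr n + dd n

namespace SteffensenSystem

variable {a sstar : ℝ} {aa bb cc dd rr : ℕ → ℝ}

theorem step (h : SteffensenSystem a aa bb cc dd rr) (ha : 0 < a) (ha2 : a ≤ 1 / 2)
    (hsstar : sstar = (1 - √(1 - 2 * a)) / a) {n : ℕ} (hr : 0 ≤ rr n) (hrs : rr n < sstar)
    (hc : cc n = a / 2 * rr n ^ 2 - rr n + 1) (hA : aa n * (1 - a * rr n) = 1) :
    (aa n * (a / 2 * cc n) < 1 ∧ cc n ≤ dd n ∧ aa n * (a * dd n) < 1) ∧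
    (0 ≤ rr (n + 1) ∧ rr (n + 1) < sstar ∧ cc (n + 1) = a / 2 * rr (n + 1) ^ 2 - rr (n + 1) + 1 ∧
      aa (n + 1) * (1 - a * rr (n + 1)) = 1) := by
  set s := √(1 - 2 * a)
  have hs : 0 ≤ s := Real.sqrt_nonneg _
  have hs2 : s ^ 2 = 1 - 2 * a := Real.sq_sqrt (by linarith)
  have hasstar : a * sstar = 1 - s := by rw [hsstar]; field_simp
  obtain ⟨q, hq⟩ : ∃ q, q = 1 - a * rr n - a / 2 * cc n := ⟨_, rfl⟩
  obtain ⟨hc0, hq0, hq1, hcq⟩ := kantorovich_quadratic_bounds ha hs hs2 hasstar hr hrs hc hq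
  have hAr : 0 < 1 - a * rr n := by nlinarith
  have hA0 : 0 < aa n := pos_of_mul_pos_left (by rw [hA]; exact one_pos) hAr.le
  have hbq : bb n = 1 / q := by
    rw [h.bb_eq, show 1 - a / 2 * aa n * cc n = aa n * q by linear_combination -hA - aa n * hq]
    field_simp
  have hdq : dd n = cc n / q := by rw [h.dd_eq, hbq]; ring
  have hdr : dd n < sstar - rr n := by rw [hdq, div_lt_iff₀ hq0]; linarith
  have had : a * dd n < 1 - a * rr n := by nlinarith
  have hcd : cc n ≤ dd n := by rw [hdq, le_div_iff₀ hq0]; nlinarith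
  refine ⟨⟨by nlinarith, hcd, by nlinarith⟩, ?_, ?_, ?_, ?_⟩
  · rw [h.rr_succ]; linarith
  · rw [h.rr_succ]; linarith
  · have hpoly : a ^ 2 / 2 * cc n ^ 2 * (rr n + cc n / 2) =
        a / 2 * (rr n * q + cc n) ^ 2 - (rr n * q + cc n) * q + q ^ 2 := by
      linear_combination q ^ 2 * hc + (a / 2 * cc n ^ 2 - cc n * q) * hq
    rw [h.cc_succ, h.rr_succ, hdq]
    field_simp
    linear_combination 4 * hpoly
  · have hX : 0 < 1 - a * rr n - a * dd n := sub_pos.2 had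
    rw [h.aa_succ, h.rr_succ, show 1 - a * aa n * dd n = aa n * (1 - a * rr n - a * dd n) by
      linear_combination -hA, mul_add, ← sub_sub]
    field_simp

theorem invariant (h : SteffensenSystem a aa bb cc dd rr) (ha : 0 < a) (ha2 : a ≤ 1 / 2)
    (hsstar : sstar = (1 - √(1 - 2 * a)) / a) (n : ℕ) :
    0 ≤ rr n ∧ rr n < sstar ∧ cc n = a / 2 * rr n ^ 2 - rr n + 1 ∧ aa n * (1 - a * rr n) = 1 := by
  induction n with
  | zero =>
    have : √(1 - 2 * a) < 1 := (Real.sqrt_lt' one_pos).2 (by linarith)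
    simp only [h.rr_zero, h.cc_zero, h.aa_zero, hsstar]
    refine ⟨le_rfl, by apply div_pos <;> linarith, by ring, by ring⟩
  | succ n ih =>
    obtain ⟨hr, hrs, hc, hA⟩ := ih
    exact (h.step ha ha2 hsstar hr hrs hc hA).2

theorem bounds (h : SteffensenSystem a aa bb cc dd rr) (ha : 0 < a) (ha2 : a ≤ 1 / 2)
    (hsstar : sstar = (1 - √(1 - 2 * a)) / a) (n : ℕ) :
    rr n < sstar ∧ aa n * (a / 2 * cc n) < 1 ∧ cc n ≤ dd n ∧ aa n * (a * dd n) < 1 := by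
  obtain ⟨hr, hrs, hc, hA⟩ := h.invariant ha ha2 hsstar n
  exact ⟨hrs, (h.step ha ha2 hsstar hr hrs hc hA).1⟩

end SteffensenSystem

namespace ContinuousLinearMap

variable {𝕜 E F : Type*} [NontriviallyNormedField 𝕜] [NormedAddCommGroup E] [NormedSpace 𝕜 E]
  [NormedAddCommGroup F] [NormedSpace 𝕜 F]

theorem IsInvertible.of_norm_sub_le [CompleteSpace E] {f g : E →L[𝕜] F} (hf : f.IsInvertible)
    {α β : ℝ} (hα : ‖f.inverse‖ ≤ α) (hfg : ‖g - f‖ ≤ β) (hαβ : α * β < 1) :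
    g.IsInvertible ∧ ‖g.inverse‖ ≤ α / (1 - α * β) := by
  set t : E →L[𝕜] E := f.inverse ∘L (f - g)
  have ht : ‖t‖ ≤ α * β := by
    calc ‖t‖ ≤ ‖f.inverse‖ * ‖f - g‖ := opNorm_comp_le _ _
      _ ≤ α * β := by
        rw [norm_sub_rev]; gcongr; exact (norm_nonneg _).trans hα
  have ht1 : ‖t‖ < 1 := ht.trans_lt hαβ
  have hg : g = f ∘L (1 - t) := by
    ext x; simp [t, hf.self_apply_inverse]
  have hu : (1 - t).IsInvertible :=
    ⟨ContinuousLinearEquiv.unitsEquiv 𝕜 E (isUnit_one_sub_of_norm_lt_one ht1).unit, rfl⟩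
  have hinv : ‖(1 - t).inverse‖ ≤ (1 - α * β)⁻¹ := by
    rw [← ringInverse_eq_inverse, ← geom_series_eq_inverse t ht1]
    calc ‖∑' n : ℕ, t ^ n‖ ≤ ‖(1 : E →L[𝕜] E)‖ - 1 + (1 - ‖t‖)⁻¹ :=
          tsum_geometric_le_of_norm_lt_one t ht1
      _ ≤ (1 - α * β)⁻¹ := by
        have : ‖(1 : E →L[𝕜] E)‖ ≤ 1 := norm_id_le
        have : (1 - ‖t‖)⁻¹ ≤ (1 - α * β)⁻¹ := by gcongr
        linarith
  refine ⟨hg ▸ hf.comp hu, ?_⟩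
  rw [hg, hf.inverse_comp_of_left, div_eq_inv_mul]
  calc ‖(1 - t).inverse ∘L f.inverse‖ ≤ ‖(1 - t).inverse‖ * ‖f.inverse‖ := opNorm_comp_le _ _
    _ ≤ (1 - α * β)⁻¹ * α := by gcongr

theorem isInvertible_neg_id :
    (-ContinuousLinearMap.id 𝕜 E).IsInvertible ∧ ‖(-ContinuousLinearMap.id 𝕜 E).inverse‖ ≤ 1 := by
  have hneg : ((ContinuousLinearEquiv.neg 𝕜 : E ≃L[𝕜] E) : E →L[𝕜] E) =
      -ContinuousLinearMap.id 𝕜 E := by ext; simp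
  rw [← hneg, inverse_equiv, ContinuousLinearEquiv.symm_neg]
  refine ⟨isInvertible_equiv, ?_⟩
  rw [hneg, norm_neg]
  exact norm_id_le

end ContinuousLinearMap

theorem exists_tendsto_norm_sub_le_of_majorant {E : Type*} [NormedAddCommGroup E]
    [CompleteSpace E] {y : ℕ → E} {r : ℕ → ℝ} {s : ℝ}
    (hy : ∀ n, ‖y (n + 1) - y n‖ ≤ r (n + 1) - r n) (hr : ∀ n, r n ≤ s) :
    ∃ ys, Tendsto y atTop (𝓝 ys) ∧ ∀ n, ‖ys - y n‖ ≤ s - r n := by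
  have hd : ∀ n, 0 ≤ r (n + 1) - r n := fun n => (norm_nonneg _).trans (hy n)
  have hsum : Summable fun n => r (n + 1) - r n :=
    summable_of_sum_range_le (c := s - r 0) hd fun n => by
      rw [Finset.sum_range_sub]; linarith [hr n]
  have hdist : ∀ n, dist (y n) (y (n + 1)) ≤ r (n + 1) - r n := fun n => by
    rw [dist_comm, dist_eq_norm]; exact hy n
  obtain ⟨ys, hys⟩ :=
    cauchySeq_tendsto_of_complete (cauchySeq_of_dist_le_of_summable _ hdist hsum)
  refine ⟨ys, hys, fun n => ?_⟩
  have hmn : ∀ m ≥ n, ‖y m - y n‖ ≤ s - r n := fun m hm => by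
    rw [← dist_eq_norm, dist_comm]
    refine (dist_le_Ico_sum_of_dist_le hm fun {k} _ _ => hdist k).trans ?_
    rw [Finset.sum_Ico_sub _ hm]; linarith [hr m]
  exact le_of_tendsto ((hys.sub_const (y n)).norm) (eventually_atTop.2 ⟨n, hmn⟩)

section DividedDifference

variable {V W : Type*} [NormedAddCommGroup V] [NormedSpace ℝ V] [NormedAddCommGroup W]
  [NormedSpace ℝ W]

noncomputable def divDiff (f : V → W) (x h : V) : V →L[ℝ] W :=
  ∫ θ in (0 : ℝ)..1, fderiv ℝ f (x + θ • h)

variable {f : V → W}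

@[simp]
theorem divDiff_zero_right [CompleteSpace W] (x : V) : divDiff f x 0 = fderiv ℝ f x := by
  simp [divDiff]

theorem norm_divDiff_sub_divDiff_le {K : ℝ≥0} (hf : LipschitzWith K (fderiv ℝ f))
    (x x' h h' : V) :
    ‖divDiff f x h - divDiff f x' h'‖ ≤ K * (‖x - x'‖ + ‖h - h'‖ / 2) := by
  have hcont : ∀ x h : V, Continuous fun θ : ℝ => fderiv ℝ f (x + θ • h) := fun x h =>
    hf.continuous.comp (by fun_prop)
  have hbound : ∀ θ ∈ Set.Ioc (0 : ℝ) 1, ‖fderiv ℝ f (x + θ • h) - fderiv ℝ f (x' + θ • h')‖ ≤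
      K * (‖x - x'‖ + θ * ‖h - h'‖) := by
    intro θ hθ
    calc _ ≤ K * ‖(x + θ • h) - (x' + θ • h')‖ := hf.norm_sub_le _ _
      _ ≤ K * (‖x - x'‖ + θ * ‖h - h'‖) := by
        gcongr
        rw [show (x + θ • h) - (x' + θ • h') = (x - x') + θ • (h - h') by
          rw [smul_sub]; abel]
        refine (norm_add_le _ _).trans_eq ?_
        rw [norm_smul, Real.norm_of_nonneg hθ.1.le]
  rw [divDiff, divDiff, ← intervalIntegral.integral_sub ((hcont x h).intervalIntegrable 0 1)
    ((hcont x' h').intervalIntegrable 0 1)]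
  refine (intervalIntegral.norm_integral_le_of_norm_le zero_le_one
    (Eventually.of_forall hbound) (Continuous.intervalIntegrable (by fun_prop) _ _)).trans_eq ?_
  simp [intervalIntegral.integral_const_mul, div_eq_inv_mul]

theorem divDiff_apply_self [CompleteSpace W] (hf : Differentiable ℝ f)
    (hf' : Continuous (fderiv ℝ f)) (x h : V) :
    divDiff f x h h = f (x + h) - f x := by
  have hcont : Continuous fun θ : ℝ => fderiv ℝ f (x + θ • h) := hf'.comp (by fun_prop)
  rw [divDiff, ContinuousLinearMap.intervalIntegral_apply (hcont.intervalIntegrable 0 1)]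
  have hderiv : ∀ θ : ℝ, HasDerivAt (fun τ : ℝ => f (x + τ • h)) (fderiv ℝ f (x + θ • h) h) θ :=
    fun θ => (hf _).hasFDerivAt.comp_hasDerivAt θ
      (by simpa using ((hasDerivAt_id θ).smul_const h).const_add x)
  rw [intervalIntegral.integral_eq_sub_of_hasDerivAt (fun θ _ => hderiv θ)
    ((hcont.clm_apply continuous_const).intervalIntegrable 0 1)]
  simp

end DividedDifference

section Steffensen

variable {V : Type*} [NormedAddCommGroup V] [NormedSpace ℝ V]

noncomputable def steffensenSeq (G : V → V) (y₀ : V) : ℕ → V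
  | 0 => y₀
  | n + 1 =>
    let y := steffensenSeq G y₀ n
    y - (divDiff G y (G y)).inverse (G y)

variable [CompleteSpace V] {G : V → V} {y₀ : V} {K : ℝ≥0}

theorem isInvertible_divDiff_of_norm_le (hG' : LipschitzWith K (fderiv ℝ G)) {y : V} {A c : ℝ}
    (hy : (fderiv ℝ G y).IsInvertible) (hA : ‖(fderiv ℝ G y).inverse‖ ≤ A) (hc : ‖G y‖ ≤ c)
    (hAc : A * (K / 2 * c) < 1) :
    (divDiff G y (G y)).IsInvertible ∧
      ‖(divDiff G y (G y)).inverse‖ ≤ A / (1 - A * (K / 2 * c)) := by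
  refine hy.of_norm_sub_le hA ?_ hAc
  calc ‖divDiff G y (G y) - fderiv ℝ G y‖ ≤ K * (‖y - y‖ + ‖G y - 0‖ / 2) := by
        simpa using norm_divDiff_sub_divDiff_le hG' y y (G y) 0
    _ = K / 2 * ‖G y‖ := by rw [sub_self, norm_zero, sub_zero]; ring
    _ ≤ K / 2 * c := by gcongr

theorem norm_apply_add_le_of_divDiff_apply (hG : Differentiable ℝ G)
    (hG' : LipschitzWith K (fderiv ℝ G)) (hy₀ : fderiv ℝ G y₀ = -ContinuousLinearMap.id ℝ V)
    {y h : V} (hL : divDiff G y (G y) h = -G y) {r c d : ℝ} (hr : ‖y - y₀‖ ≤ r)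
    (hc : ‖G y‖ ≤ c) (hd : ‖h‖ ≤ d) :
    ‖G (y + h)‖ ≤ K ^ 2 / 2 * d ^ 2 * (r + c / 2) := by
  have hGyh : G (y + h) = (divDiff G y h - divDiff G y (G y)) h := by
    rw [sub_apply, hL, divDiff_apply_self hG hG'.continuous]; abel
  have hhGy : h - G y = (divDiff G y (G y) - divDiff G y₀ 0) h := by
    rw [sub_apply, hL, divDiff_zero_right, hy₀]; simp; abel
  have hr0 : 0 ≤ r := (norm_nonneg _).trans hr
  have hc0 : 0 ≤ c := (norm_nonneg _).trans hc
  have hd0 : 0 ≤ d := (norm_nonneg _).trans hd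
  have hnorm : ‖h - G y‖ ≤ K * (r + c / 2) * d := by
    rw [hhGy]
    refine (ContinuousLinearMap.le_opNorm _ _).trans ?_
    have hL₀ := norm_divDiff_sub_divDiff_le hG' y y₀ (G y) 0
    rw [sub_zero] at hL₀
    gcongr
    exact hL₀.trans (by gcongr)
  rw [hGyh]
  refine (ContinuousLinearMap.le_opNorm _ _).trans ?_
  have hL₁ := norm_divDiff_sub_divDiff_le hG' y y h (G y)
  rw [sub_self, norm_zero, zero_add] at hL₁
  calc _ ≤ K * (‖h - G y‖ / 2) * ‖h‖ := by gcongr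
    _ ≤ K * (K * (r + c / 2) * d / 2) * d := by gcongr
    _ = K ^ 2 / 2 * d ^ 2 * (r + c / 2) := by ring

theorem steffensenSeq_step (hG : Differentiable ℝ G) (hG' : LipschitzWith K (fderiv ℝ G))
    (hy₀ : fderiv ℝ G y₀ = -ContinuousLinearMap.id ℝ V) {aa bb cc dd rr : ℕ → ℝ}
    (hsys : SteffensenSystem K aa bb cc dd rr) {n : ℕ}
    (hAc : aa n * (K / 2 * cc n) < 1) (hAd : aa n * (K * dd n) < 1)
    (hr : ‖steffensenSeq G y₀ n - y₀‖ ≤ rr n) (hc : ‖G (steffensenSeq G y₀ n)‖ ≤ cc n)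
    (hinv : (fderiv ℝ G (steffensenSeq G y₀ n)).IsInvertible)
    (hA : ‖(fderiv ℝ G (steffensenSeq G y₀ n)).inverse‖ ≤ aa n) :
    (divDiff G (steffensenSeq G y₀ n) (G (steffensenSeq G y₀ n))).IsInvertible ∧
      ‖steffensenSeq G y₀ (n + 1) - steffensenSeq G y₀ n‖ ≤ dd n ∧
      ‖steffensenSeq G y₀ (n + 1) - y₀‖ ≤ rr (n + 1) ∧
      ‖G (steffensenSeq G y₀ (n + 1))‖ ≤ cc (n + 1) ∧
      (fderiv ℝ G (steffensenSeq G y₀ (n + 1))).IsInvertible ∧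
      ‖(fderiv ℝ G (steffensenSeq G y₀ (n + 1))).inverse‖ ≤ aa (n + 1) := by
  set y := steffensenSeq G y₀
  set L := divDiff G (y n) (G (y n))
  obtain ⟨hL, hLb⟩ := isInvertible_divDiff_of_norm_le hG' hinv hA hc hAc
  replace hLb : ‖L.inverse‖ ≤ bb n := hLb.trans_eq (by rw [hsys.bb_eq]; ring_nf)
  have hstep : y (n + 1) - y n = -L.inverse (G (y n)) := sub_sub_cancel_left _ _
  have hd : ‖y (n + 1) - y n‖ ≤ dd n := by
    rw [hstep, norm_neg, hsys.dd_eq]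
    exact (L.inverse.le_opNorm _).trans
      (mul_le_mul hLb hc (norm_nonneg _) ((norm_nonneg _).trans hLb))
  have hLstep : L (y (n + 1) - y n) = -G (y n) := by
    rw [hstep, map_neg, hL.self_apply_inverse]
  refine ⟨hL, hd, ?_, ?_, ?_⟩
  · rw [hsys.rr_succ]
    linarith [norm_sub_le_norm_sub_add_norm_sub (y (n + 1)) (y n) y₀]
  · have := norm_apply_add_le_of_divDiff_apply hG hG' hy₀ hLstep hr hc hd
    rwa [add_sub_cancel, ← hsys.cc_succ] at this
  · have hGd : ‖fderiv ℝ G (y (n + 1)) - fderiv ℝ G (y n)‖ ≤ K * dd n :=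
      (hG'.norm_sub_le _ _).trans (by gcongr)
    obtain ⟨hinv', hA'⟩ := hinv.of_norm_sub_le hA hGd hAd
    exact ⟨hinv', hA'.trans_eq (by rw [hsys.aa_succ]; ring_nf)⟩

theorem steffensenSeq_converges (hG : Differentiable ℝ G) (hG' : LipschitzWith K (fderiv ℝ G))
    (hy₀ : fderiv ℝ G y₀ = -ContinuousLinearMap.id ℝ V) (hGy₀ : ‖G y₀‖ ≤ 1)
    {aa bb cc dd rr : ℕ → ℝ} (hsys : SteffensenSystem K aa bb cc dd rr) (hK : 0 < (K : ℝ))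
    (hK2 : (K : ℝ) ≤ 1 / 2) {sstar : ℝ} (hsstar : sstar = (1 - √(1 - 2 * K)) / K) :
    (∀ n, (divDiff G (steffensenSeq G y₀ n) (G (steffensenSeq G y₀ n))).IsInvertible) ∧
      (∀ n, ‖steffensenSeq G y₀ (n + 1) - steffensenSeq G y₀ n‖ ≤ dd n) ∧
      (∀ n, (fderiv ℝ G (steffensenSeq G y₀ n)).IsInvertible ∧
        ‖(fderiv ℝ G (steffensenSeq G y₀ n)).inverse‖ ≤ aa n) ∧
      ∃ ys, Tendsto (steffensenSeq G y₀) atTop (𝓝 ys) ∧ G ys = 0 ∧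
        ∀ n, ‖ys - steffensenSeq G y₀ n‖ ≤ sstar - rr n := by
  set y := steffensenSeq G y₀
  have hbd := hsys.bounds hK hK2 hsstar
  have hinv : ∀ n, ‖y n - y₀‖ ≤ rr n ∧ ‖G (y n)‖ ≤ cc n ∧ (fderiv ℝ G (y n)).IsInvertible ∧
      ‖(fderiv ℝ G (y n)).inverse‖ ≤ aa n := by
    intro n
    induction n with
    | zero =>
      simp only [y, steffensenSeq, sub_self, norm_zero, hsys.rr_zero, hsys.cc_zero, hsys.aa_zero,
        hy₀]
      exact ⟨le_rfl, hGy₀, ContinuousLinearMap.isInvertible_neg_id⟩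
    | succ n ih =>
      obtain ⟨hr, hc, hi, hA⟩ := ih
      obtain ⟨-, hAc, -, hAd⟩ := hbd n
      exact (steffensenSeq_step hG hG' hy₀ hsys hAc hAd hr hc hi hA).2.2
  have hstep n := by
    obtain ⟨-, hAc, -, hAd⟩ := hbd n
    obtain ⟨hr, hc, hi, hA⟩ := hinv n
    exact steffensenSeq_step hG hG' hy₀ hsys hAc hAd hr hc hi hA
  have hd n : ‖y (n + 1) - y n‖ ≤ dd n := (hstep n).2.1
  have hdd n : dd n = rr (n + 1) - rr n := by rw [hsys.rr_succ]; ring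
  obtain ⟨ys, hys, htail⟩ := exists_tendsto_norm_sub_le_of_majorant (fun n => hdd n ▸ hd n)
    fun n => (hbd n).1.le
  refine ⟨fun n => (hstep n).1, hd, fun n => (hinv n).2.2, ys, hys, ?_, htail⟩
  have hdsum : Summable dd := summable_of_sum_range_le (c := sstar)
    (fun n => (norm_nonneg _).trans (hd n)) fun n => by
      simp_rw [hdd, Finset.sum_range_sub, hsys.rr_zero]; linarith [(hbd n).1]
  exact tendsto_nhds_unique ((hG.continuous.tendsto ys).comp hys) (squeeze_zero_norm
    (fun n => (hinv n).2.1.trans (hbd n).2.2.1) hdsum.tendsto_atTop_zero)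

end Steffensen

section Adimensional

variable {E V : Type*} [NormedAddCommGroup E] [NormedSpace ℝ E] [NormedAddCommGroup V]
  [NormedSpace ℝ V] {F : E → V} {F' : E → E →L[ℝ] V}

theorem norm_neg_smul_symm_sub_le {c B : ℝ} (hc : 0 ≤ c) {e : E ≃L[ℝ] V}
    (hB : ‖(e.symm : V →L[ℝ] E)‖ ≤ B) (u v : V) :
    ‖-(c • e.symm u) - -(c • e.symm v)‖ ≤ c * B * ‖u - v‖ := by
  rw [← neg_sub', norm_neg, ← smul_sub, ← map_sub, norm_smul, Real.norm_of_nonneg hc, mul_assoc]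
  gcongr
  exact (e.symm : V →L[ℝ] E).le_of_opNorm_le hB _

theorem norm_comp_sub_comp_le_of_norm_le {F'' : E → E →L[ℝ] E →L[ℝ] V}
    (hF'' : ∀ x, HasFDerivAt F' (F'' x) x) {K₂ : ℝ} (hbound : ∀ x, ‖F'' x‖ ≤ K₂)
    {T : V → E} {η : ℝ} (hT : ∀ u v, ‖T u - T v‖ ≤ η * ‖u - v‖) {N : V →L[ℝ] E} {B : ℝ}
    (hN : ‖N‖ ≤ B) (u v : V) :
    ‖F' (T u) ∘L N - F' (T v) ∘L N‖ ≤ K₂ * B * η * ‖u - v‖ := by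
  have hK₂ : 0 ≤ K₂ := (norm_nonneg (F'' 0)).trans (hbound 0)
  have hF' : ‖F' (T u) - F' (T v)‖ ≤ K₂ * (η * ‖u - v‖) :=
    (convex_univ.norm_image_sub_le_of_norm_hasFDerivWithin_le
      (fun x _ => (hF'' x).hasFDerivWithinAt) (fun x _ => hbound x) trivial trivial).trans
      (by gcongr; exact hT u v)
  rw [← ContinuousLinearMap.sub_comp]
  calc _ ≤ ‖F' (T u) - F' (T v)‖ * ‖N‖ := ContinuousLinearMap.opNorm_comp_le _ _
    _ ≤ K₂ * (η * ‖u - v‖) * B := mul_le_mul hF' hN (norm_nonneg _) ((norm_nonneg _).trans hF')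
    _ = K₂ * B * η * ‖u - v‖ := by ring

theorem ContinuousLinearMap.IsInvertible.exists_equiv_of_comp_equiv {f : E →L[ℝ] V}
    (ε : V ≃L[ℝ] E) (hf : (f ∘L (ε : V →L[ℝ] E)).IsInvertible) {A : ℝ}
    (hA : ‖(f ∘L (ε : V →L[ℝ] E)).inverse‖ ≤ A) :
    ∃ e : E ≃L[ℝ] V, (e : E →L[ℝ] V) = f ∧ ‖(e.symm : V →L[ℝ] E)‖ ≤ A * ‖(ε : V →L[ℝ] E)‖ := by
  obtain ⟨e, he⟩ := ContinuousLinearMap.isInvertible_comp_equiv.1 hf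
  refine ⟨e, he, ?_⟩
  have : (e.symm : V →L[ℝ] E) = (ε : V →L[ℝ] E) ∘L (f ∘L (ε : V →L[ℝ] E)).inverse := by
    rw [ContinuousLinearMap.inverse_comp_equiv, ← he, ContinuousLinearMap.inverse_equiv]
    ext; simp
  rw [this, mul_comm]
  exact (ContinuousLinearMap.opNorm_comp_le _ _).trans (by gcongr)

-- With `c = ‖F x₀‖` and `e = F' x₀` this is the paper's adimensional form of `F`.
variable (F) in
noncomputable def adimensional (c : ℝ) (e : E ≃L[ℝ] V) (y : V) : V :=
  c⁻¹ • F (-(c • e.symm y))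

variable {c : ℝ} {e : E ≃L[ℝ] V}

theorem norm_neg_trans_symm :
    ‖((ContinuousLinearEquiv.neg ℝ).trans e.symm : V →L[ℝ] E)‖ = ‖(e.symm : V →L[ℝ] E)‖ := by
  rw [show ((ContinuousLinearEquiv.neg ℝ).trans e.symm : V →L[ℝ] E) = -(e.symm : V →L[ℝ] E) by
    ext; simp, norm_neg]

theorem hasFDerivAt_adimensional (hF : ∀ x, HasFDerivAt F (F' x) x) (hc : c ≠ 0) (y : V) :
    HasFDerivAt (adimensional F c e)
      (F' (-(c • e.symm y)) ∘L ((ContinuousLinearEquiv.neg ℝ).trans e.symm : V →L[ℝ] E)) y := by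
  let S : V →L[ℝ] E := -(c • (e.symm : V →L[ℝ] E))
  convert ((hF (S y)).comp y S.hasFDerivAt).const_smul c⁻¹ using 1
  · rfl
  · ext v
    simp [S, smul_smul, inv_mul_cancel₀ hc]

theorem norm_fderiv_adimensional_sub_le (hF : ∀ x, HasFDerivAt F (F' x) x)
    {F'' : E → E →L[ℝ] E →L[ℝ] V} (hF'' : ∀ x, HasFDerivAt F' (F'' x) x) {K₂ : ℝ}
    (hbound : ∀ x, ‖F'' x‖ ≤ K₂) (hc : 0 < c) {B η : ℝ} (hB : ‖(e.symm : V →L[ℝ] E)‖ ≤ B)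
    (hcB : c * B ≤ η) (u v : V) :
    ‖fderiv ℝ (adimensional F c e) u - fderiv ℝ (adimensional F c e) v‖ ≤
      K₂ * B * η * ‖u - v‖ := by
  rw [(hasFDerivAt_adimensional hF hc.ne' u).fderiv, (hasFDerivAt_adimensional hF hc.ne' v).fderiv]
  refine norm_comp_sub_comp_le_of_norm_le hF'' hbound
    (fun p q => (norm_neg_smul_symm_sub_le hc.le hB p q).trans (by gcongr))
    (norm_neg_trans_symm.trans_le hB) u v

theorem neg_smul_symm_neg_inv_smul (hc : c ≠ 0) (x : E) : -(c • e.symm (-(c⁻¹ • e x))) = x := by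
  simp [hc]

theorem fderiv_adimensional_base (hF : ∀ x, HasFDerivAt F (F' x) x) {x₀ : E} (hx₀ : F x₀ ≠ 0)
    (he : (e : E →L[ℝ] V) = F' x₀) :
    fderiv ℝ (adimensional F ‖F x₀‖ e) (-(‖F x₀‖⁻¹ • e x₀)) = -ContinuousLinearMap.id ℝ V := by
  rw [(hasFDerivAt_adimensional hF (norm_ne_zero_iff.2 hx₀) _).fderiv,
    neg_smul_symm_neg_inv_smul (norm_ne_zero_iff.2 hx₀), ← he]
  ext; simp

theorem norm_adimensional_base {x₀ : E} (hx₀ : F x₀ ≠ 0) :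
    ‖adimensional F ‖F x₀‖ e (-(‖F x₀‖⁻¹ • e x₀))‖ = 1 := by
  have hc : ‖F x₀‖ ≠ 0 := norm_ne_zero_iff.2 hx₀
  rw [adimensional, neg_smul_symm_neg_inv_smul hc, norm_smul, norm_inv, norm_norm,
    inv_mul_cancel₀ hc]

theorem exists_equiv_of_isInvertible_fderiv_adimensional (hF : ∀ x, HasFDerivAt F (F' x) x)
    (hc : c ≠ 0) {y : V} (hy : (fderiv ℝ (adimensional F c e) y).IsInvertible) {A : ℝ}
    (hA : ‖(fderiv ℝ (adimensional F c e) y).inverse‖ ≤ A) :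
    ∃ e' : E ≃L[ℝ] V, (e' : E →L[ℝ] V) = F' (-(c • e.symm y)) ∧
      ‖(e'.symm : V →L[ℝ] E)‖ ≤ A * ‖(e.symm : V →L[ℝ] E)‖ := by
  rw [(hasFDerivAt_adimensional hF hc y).fderiv] at hy hA
  obtain ⟨e', he', hA'⟩ := hy.exists_equiv_of_comp_equiv _ hA
  exact ⟨e', he', hA'.trans_eq (by rw [norm_neg_trans_symm])⟩

end Adimensional

theorem stmt_17_general
    {E V : Type*} [NormedAddCommGroup E] [NormedSpace ℝ E] [CompleteSpace E]
    [NormedAddCommGroup V] [NormedSpace ℝ V] [CompleteSpace V]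
    (F : E → V) (F' : E → (E →L[ℝ] V)) (F'' : E → (E →L[ℝ] E →L[ℝ] V))
    (hF' : ∀ x, HasFDerivAt F (F' x) x)
    (hF'' : ∀ x, HasFDerivAt F' (F'' x) x)
    (x₀ : E) (hx₀ : F x₀ ≠ 0)
    (e₀ : E ≃L[ℝ] V) (he₀ : (e₀ : E →L[ℝ] V) = F' x₀)
    (K₂ B η : ℝ) (hK₂ : 0 < K₂) (hB : 0 < B) (hη : 0 < η)
    (hF₀ : ‖F x₀‖ ≤ η / B)
    (hBinv : ‖(e₀.symm : V →L[ℝ] E)‖ ≤ B)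
    (hbound : ∀ x, ‖F'' x‖ ≤ K₂)
    (a : ℝ) (haK : a = K₂ * B * η) (hKant : a ≤ 1 / 2)
    (aa bb cc dd rr : ℕ → ℝ)
    (ha0 : aa 0 = 1) (hc0 : cc 0 = 1) (hr0 : rr 0 = 0)
    (hb : ∀ n, bb n = aa n / (1 - a / 2 * aa n * cc n))
    (hd : ∀ n, dd n = bb n * cc n)
    (haa : ∀ n, aa (n + 1) = aa n / (1 - a * aa n * dd n))
    (hcc : ∀ n, cc (n + 1) = a ^ 2 / 2 * (dd n) ^ 2 * (rr n + cc n / 2))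
    (hrr : ∀ n, rr (n + 1) = rr n + dd n)
    (sstar : ℝ) (hsstar : sstar = (1 - Real.sqrt (1 - 2 * a)) / a)
    (T : V → E) (hT : T = fun y => -(‖F x₀‖ • e₀.symm y))
    (G : V → V) (hG : G = fun y => (‖F x₀‖)⁻¹ • F (T y))
    (y₀ : V) (hy₀ : y₀ = -((‖F x₀‖)⁻¹ • e₀ x₀)) :
    ∃ y : ℕ → V, y 0 = y₀ ∧
      (∀ n, ∃ e : V ≃L[ℝ] V,
        (e : V →L[ℝ] V) = ∫ θ in (0 : ℝ)..1, fderiv ℝ G (y n + θ • G (y n)) ∧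
        y (n + 1) = y n - e.symm (G (y n))) ∧
      ∃ ys : V, Filter.Tendsto y Filter.atTop (nhds ys) ∧ G ys = 0 ∧
        F (T ys) = 0 ∧
        (∀ n, ‖T (y (n + 1)) - T (y n)‖ ≤ dd n * η) ∧
        (∀ n, ‖T ys - T (y n)‖ ≤ (sstar - rr n) * η) ∧
        (∀ n, ∃ en : E ≃L[ℝ] V, (en : E →L[ℝ] V) = F' (T (y n)) ∧
          ‖(en.symm : V →L[ℝ] E)‖ ≤ aa n * B) := by
  have hc : 0 < ‖F x₀‖ := norm_pos_iff.2 hx₀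
  have ha : 0 < a := by rw [haK]; positivity
  have hcB : ‖F x₀‖ * B ≤ η := by rwa [le_div_iff₀ hB] at hF₀
  have hTlip (u v : V) : ‖T u - T v‖ ≤ η * ‖u - v‖ := by
    rw [hT]; exact (norm_neg_smul_symm_sub_le hc.le hBinv u v).trans (by gcongr)
  obtain rfl : G = adimensional F ‖F x₀‖ e₀ := by rw [hG, hT]; rfl
  obtain rfl := hy₀
  obtain ⟨hL, hstep, hGinv, ys, hys, hGys, htail⟩ :=
    steffensenSeq_converges (K := ⟨a, ha.le⟩)
      (fun y => (hasFDerivAt_adimensional hF' hc.ne' y).differentiableAt)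
      (LipschitzWith.of_dist_le_mul fun u v => by
        simp only [dist_eq_norm]
        exact (norm_fderiv_adimensional_sub_le hF' hF'' hbound hc hBinv hcB u v).trans_eq
          (by rw [← haK]; rfl))
      (fderiv_adimensional_base hF' hx₀ he₀) (norm_adimensional_base hx₀).le
      ⟨ha0, hc0, hr0, hb, hd, haa, hcc, hrr⟩ ha hKant hsstar
  refine ⟨steffensenSeq _ _, rfl, fun n => ?_, ys, hys, hGys, ?_, fun n => ?_, fun n => ?_,
    fun n => ?_⟩
  · obtain ⟨e, he⟩ := hL n
    exact ⟨e, he, by simp only [steffensenSeq, ← he, ContinuousLinearMap.inverse_equiv]; rfl⟩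
  · simpa [adimensional, hT, hc.ne'] using hGys
  · exact (hTlip _ _).trans (by rw [mul_comm]; gcongr; exact hstep n)
  · exact (hTlip _ _).trans (by rw [mul_comm]; gcongr; exact htail n)
  · obtain ⟨hinv, hA⟩ := hGinv n
    obtain ⟨e, he, heB⟩ := exists_equiv_of_isInvertible_fderiv_adimensional hF' hc.ne' hinv hA
    exact ⟨e, by rw [he, hT], heB.trans (by gcongr; exact (norm_nonneg _).trans hA)⟩

/-- **Semilocal convergence of the ASIS method (main theorem).**
Let `E`, `V` be real Banach spaces, `F : E → V` twice continuously Fréchet differentiable,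
`x₀ ∈ E` with `F(x₀) ≠ 0` and `F'(x₀)` invertible.  Let `K₂, B, η > 0` satisfy
`‖F(x₀)‖ ≤ η/B`, `‖F'(x₀)⁻¹‖ ≤ B`, `‖F''(x)‖ ≤ K₂` for all `x`, and `a := K₂Bη ≤ 1/2`.
With the adimensional form `G(y) = F(−‖F(x₀)‖·F'(x₀)⁻¹y)/‖F(x₀)‖`,
`y₀ = −F'(x₀)x₀/‖F(x₀)‖`, the ASIS sequence
`y_{n+1} = y_n − G[y_n, y_n + G(y_n)]⁻¹ G(y_n)` (integral divided differences) is well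
defined and converges to a root `y*` of `G`.  Setting `x_n = −‖F(x₀)‖·F'(x₀)⁻¹ y_n` and
`x* = −‖F(x₀)‖·F'(x₀)⁻¹ y*`, one has `F(x*) = 0` and, for all `n`:
`‖x_{n+1} − x_n‖ ≤ d_n η`; `‖x* − x_n‖ ≤ (s* − r_n) η`; `F'(x_n)` is invertible with
`‖F'(x_n)⁻¹‖ ≤ a_n B`, where `s* = (1 − √(1 − 2a))/a` and `(a_n), (b_n), (c_n), (d_n),
(r_n)` is the Steffensen system of sequences associated with `a`. -/
theorem stmt_17
    {E V : Type*} [NormedAddCommGroup E] [NormedSpace ℝ E] [CompleteSpace E]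
    [NormedAddCommGroup V] [NormedSpace ℝ V] [CompleteSpace V]
    (F : E → V) (F' : E → (E →L[ℝ] V)) (F'' : E → (E →L[ℝ] E →L[ℝ] V))
    (hF' : ∀ x, HasFDerivAt F (F' x) x)
    (hF'' : ∀ x, HasFDerivAt F' (F'' x) x)
    (hF''cont : Continuous F'')
    (x₀ : E) (hx₀ : F x₀ ≠ 0)
    (e₀ : E ≃L[ℝ] V) (he₀ : (e₀ : E →L[ℝ] V) = F' x₀)
    (K₂ B η : ℝ) (hK₂ : 0 < K₂) (hB : 0 < B) (hη : 0 < η)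
    (hF₀ : ‖F x₀‖ ≤ η / B)
    (hBinv : ‖(e₀.symm : V →L[ℝ] E)‖ ≤ B)
    (hbound : ∀ x, ‖F'' x‖ ≤ K₂)
    (a : ℝ) (haK : a = K₂ * B * η) (hKant : a ≤ 1 / 2)
    (aa bb cc dd rr : ℕ → ℝ)
    (ha0 : aa 0 = 1) (hc0 : cc 0 = 1) (hr0 : rr 0 = 0)
    (hb : ∀ n, bb n = aa n / (1 - a / 2 * aa n * cc n))
    (hd : ∀ n, dd n = bb n * cc n)
    (haa : ∀ n, aa (n + 1) = aa n / (1 - a * aa n * dd n))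
    (hcc : ∀ n, cc (n + 1) = a ^ 2 / 2 * (dd n) ^ 2 * (rr n + cc n / 2))
    (hrr : ∀ n, rr (n + 1) = rr n + dd n)
    (sstar : ℝ) (hsstar : sstar = (1 - Real.sqrt (1 - 2 * a)) / a)
    (T : V → E) (hT : T = fun y => -(‖F x₀‖ • e₀.symm y))
    (G : V → V) (hG : G = fun y => (‖F x₀‖)⁻¹ • F (T y))
    (y₀ : V) (hy₀ : y₀ = -((‖F x₀‖)⁻¹ • e₀ x₀)) :
    ∃ y : ℕ → V, y 0 = y₀ ∧
      (∀ n, ∃ e : V ≃L[ℝ] V,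
        (e : V →L[ℝ] V) = ∫ θ in (0 : ℝ)..1, fderiv ℝ G (y n + θ • G (y n)) ∧
        y (n + 1) = y n - e.symm (G (y n))) ∧
      ∃ ys : V, Filter.Tendsto y Filter.atTop (nhds ys) ∧ G ys = 0 ∧
        F (T ys) = 0 ∧
        (∀ n, ‖T (y (n + 1)) - T (y n)‖ ≤ dd n * η) ∧
        (∀ n, ‖T ys - T (y n)‖ ≤ (sstar - rr n) * η) ∧
        (∀ n, ∃ en : E ≃L[ℝ] V, (en : E →L[ℝ] V) = F' (T (y n)) ∧
          ‖(en.symm : V →L[ℝ] E)‖ ≤ aa n * B) :=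
  stmt_17_general F F' F'' hF' hF'' x₀ hx₀ e₀ he₀ K₂ B η hK₂ hB hη hF₀ hBinv hbound a haK hKant aa
    bb cc dd rr ha0 hc0 hr0 hb hd haa hcc hrr sstar hsstar T hT G hG y₀ hy₀
end
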